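/- arXiv:math/0502283 — 7 statements merged into one kernel-verified Lean document; each statement's English description precedes it below -/
import Mathlib

section
/- If Λ : ℝ^(2n) → ℝ is a weight function (i.e. continuous, positive, there exists μ > 0 with ⟨z⟩^μ ≲ Λ(z) ≲ ⟨z⟩ on ℝ^(2n), and Λ(z) ∼ Λ(ζ) uniformly on the set {(z,ζ) : |ζ−z| ≤ μΛ(z)}), then Λ is temperate: there is a constant C > 0 such that Λ(z) ≤ C·Λ(ζ)·⟨z−ζ⟩ for all z, ζ ∈ ℝ^(2n). -/
open Set

/-- Japanese bracket `⟨z⟩ = (1+|z|²)^(1/2)`. -/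
noncomputable def jap {V : Type*} [NormedAddCommGroup V] (z : V) : ℝ :=
  Real.sqrt (1 + ‖z‖ ^ 2)

lemma one_le_jap {V : Type*} [NormedAddCommGroup V] (z : V) : 1 ≤ jap z := by
  have h : Real.sqrt 1 ≤ Real.sqrt (1 + ‖z‖ ^ 2) :=
    Real.sqrt_le_sqrt (by nlinarith [sq_nonneg ‖z‖])
  simpa [jap] using h

lemma norm_le_jap {V : Type*} [NormedAddCommGroup V] (z : V) : ‖z‖ ≤ jap z := by
  rw [jap]
  exact (Real.le_sqrt (norm_nonneg z) (by positivity)).mpr (by nlinarith)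

/-- A weight function is temperate: `Λ(z) ≤ C·Λ(ζ)·⟨z−ζ⟩`. -/
theorem stmt0 {n : ℕ} (Λ : (Fin (2 * n) → ℝ) → ℝ)
    (hcont : Continuous Λ) (hpos : ∀ z, 0 < Λ z)
    (μ c₁ c₂ c₃ c₄ : ℝ) (hμ : 0 < μ) (hc₁ : 0 < c₁) (hc₂ : 0 < c₂)
    (hc₃ : 0 < c₃) (hc₄ : 0 < c₄)
    (hlow : ∀ z, c₁ * jap z ^ μ ≤ Λ z) (hup : ∀ z, Λ z ≤ c₂ * jap z)
    (hequiv : ∀ z ζ, ‖ζ - z‖ ≤ μ * Λ z → c₃ * Λ ζ ≤ Λ z ∧ Λ z ≤ c₄ * Λ ζ) :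
    ∃ C > 0, ∀ z ζ, Λ z ≤ C * Λ ζ * jap (z - ζ) := by
  refine ⟨max c₄ (1 / (μ * c₁)), lt_max_of_lt_left hc₄, fun z ζ => ?_⟩
  have hj1 : (1:ℝ) ≤ jap (z - ζ) := one_le_jap _
  have hj0 : (0:ℝ) ≤ jap (z - ζ) := le_trans zero_le_one hj1
  have hΛζ : c₁ ≤ Λ ζ := by
    have h1 : (1:ℝ) ≤ jap ζ ^ μ := Real.one_le_rpow (one_le_jap ζ) hμ.le
    nlinarith [hlow ζ]
  have hmaxc₄ : c₄ ≤ max c₄ (1 / (μ * c₁)) := le_max_left _ _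
  have hmaxinv : 1 / (μ * c₁) ≤ max c₄ (1 / (μ * c₁)) := le_max_right _ _
  rcases le_or_gt ‖ζ - z‖ (μ * Λ z) with h | h
  · obtain ⟨-, h2⟩ := hequiv z ζ h
    calc Λ z ≤ c₄ * Λ ζ := h2
      _ = c₄ * Λ ζ * 1 := by ring
      _ ≤ max c₄ (1 / (μ * c₁)) * Λ ζ * jap (z - ζ) :=
          mul_le_mul (mul_le_mul_of_nonneg_right hmaxc₄ (hpos ζ).le) hj1 zero_le_one
            (mul_nonneg (le_trans hc₄.le hmaxc₄) (hpos ζ).le)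
  · have hn : ‖z - ζ‖ = ‖ζ - z‖ := norm_sub_rev _ _
    have hjn : ‖z - ζ‖ ≤ jap (z - ζ) := norm_le_jap _
    have key : μ * Λ z ≤ jap (z - ζ) := by linarith
    have h0 : (0:ℝ) < 1 / (μ * c₁) := by positivity
    calc Λ z = 1 / (μ * c₁) * c₁ * (μ * Λ z) := by field_simp
      _ ≤ 1 / (μ * c₁) * Λ ζ * jap (z - ζ) :=
          mul_le_mul (mul_le_mul_of_nonneg_left hΛζ h0.le) key
            (mul_nonneg hμ.le (hpos z).le) (mul_nonneg h0.le (hpos ζ).le)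
      _ ≤ max c₄ (1 / (μ * c₁)) * Λ ζ * jap (z - ζ) :=
          mul_le_mul_of_nonneg_right (mul_le_mul_of_nonneg_right hmaxinv (hpos ζ).le) hj0
end

section
/- Let f ∈ 𝒮(ℝⁿ) (Schwartz space) and let φ ∈ 𝒮(ℝⁿ) be a mollifier with ∫φ = 1 and ∫ x^α φ(x)dx = 0 for all α ≠ 0; set φ_ε(x) = ε^{-n}φ(x/ε). Then the net (f − f∗φ_ε)_{ε∈(0,1]} belongs to 𝒩_𝒮(ℝⁿ): for every multi-index α, β and every q ∈ ℕ, sup_{ε∈(0,1]} ε^{-q} ‖x^α ∂^β(f − f∗φ_ε)‖_{L^∞(ℝⁿ)} < ∞. -/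
open Set MeasureTheory

/-- Nets of smooth functions on `ℝⁿ` indexed by `ε ∈ (0,1]`. -/
def SmoothNet {n : ℕ} (u : ℝ → (Fin n → ℝ) → ℂ) : Prop :=
  ∀ ε ∈ Set.Ioc (0 : ℝ) 1, ContDiff ℝ (⊤ : ℕ∞) (u ε)

/-- The ideal `𝒩_𝒮(ℝⁿ)`. -/
def NegligibleS {n : ℕ} (u : ℝ → (Fin n → ℝ) → ℂ) : Prop :=
  SmoothNet u ∧ ∀ k K q : ℕ, ∃ c : ℝ, ∀ ε ∈ Set.Ioc (0 : ℝ) 1, ∀ x,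
    ‖x‖ ^ k * ‖iteratedFDeriv ℝ K (u ε) x‖ ≤ c * ε ^ q

set_option maxHeartbeats 1000000
set_option synthInstance.maxHeartbeats 500000

namespace Stmt3Aux

open SchwartzMap

variable {n : ℕ}

/-- Convolution-type smoothing operator, in rescaled form. -/
noncomputable def Tconv (φ : 𝓢((Fin n → ℝ), ℂ)) (ε : ℝ) {E : Type}
    [NormedAddCommGroup E] [NormedSpace ℂ E] (g : 𝓢((Fin n → ℝ), E)) :
    (Fin n → ℝ) → E := fun x => ∫ z, φ z • g (x - ε • z)

lemma norm_schwartz_le {E : Type} [NormedAddCommGroup E] [NormedSpace ℂ E]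
    (g : 𝓢((Fin n → ℝ), E)) : ∃ C : ℝ, 0 < C ∧ ∀ x, ‖g x‖ ≤ C := by
  obtain ⟨C, hC, h⟩ := g.decay 0 0
  exact ⟨C, hC, fun x => by simpa [norm_iteratedFDeriv_zero] using h x⟩

lemma schwartz_diff {E : Type} [NormedAddCommGroup E] [NormedSpace ℂ E]
    (g : 𝓢((Fin n → ℝ), E)) : Differentiable ℝ g :=
  (g.smooth 1).differentiable (by simp)

lemma integrable_Tconv (φ : 𝓢((Fin n → ℝ), ℂ)) {E : Type} [NormedAddCommGroup E]
    [NormedSpace ℂ E] (g : 𝓢((Fin n → ℝ), E)) (ε : ℝ) (x : Fin n → ℝ) :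
    Integrable (fun z => φ z • g (x - ε • z)) := by
  obtain ⟨C, hC, hCle⟩ := norm_schwartz_le g
  refine ((φ.integrable (μ := volume)).norm.mul_const C).mono' ?_ ?_
  · exact (φ.continuous.smul (g.continuous.comp (by fun_prop))).aestronglyMeasurable
  · refine Filter.Eventually.of_forall fun z => ?_
    rw [norm_smul]
    exact mul_le_mul_of_nonneg_left (hCle _) (norm_nonneg _)

lemma hasFDerivAt_Tconv (φ : 𝓢((Fin n → ℝ), ℂ)) {E : Type} [NormedAddCommGroup E]
    [NormedSpace ℂ E] [CompleteSpace E] (g : 𝓢((Fin n → ℝ), E)) (ε : ℝ) (x₀ : Fin n → ℝ) :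
    HasFDerivAt (Tconv φ ε g) (Tconv φ ε (fderivCLM ℝ _ _ g) x₀) x₀ := by
  obtain ⟨C, hC, hCle⟩ := norm_schwartz_le (fderivCLM ℝ _ _ g)
  have hmeas : ∀ᶠ x in nhds x₀, AEStronglyMeasurable
      (fun z : Fin n → ℝ => φ z • g (x - ε • z)) volume :=
    Filter.Eventually.of_forall fun x =>
      (φ.continuous.smul (g.continuous.comp (by fun_prop))).aestronglyMeasurable
  have hint : Integrable (fun z : Fin n → ℝ => φ z • g (x₀ - ε • z)) volume :=
    integrable_Tconv φ g ε x₀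
  have hmeas' : AEStronglyMeasurable
      (fun z : Fin n → ℝ => φ z • (fderivCLM ℝ _ _ g) (x₀ - ε • z)) volume :=
    (φ.continuous.smul ((fderivCLM ℝ _ _ g).continuous.comp (by fun_prop))).aestronglyMeasurable
  have hbdd : ∀ᵐ z : Fin n → ℝ ∂volume, ∀ x ∈ Metric.ball x₀ 1,
      ‖φ z • (fderivCLM ℝ _ _ g) (x - ε • z)‖ ≤ ‖φ z‖ * C := by
    refine Filter.Eventually.of_forall fun z => fun x _ => ?_
    rw [norm_smul (φ z) ((fderivCLM ℝ _ _ g) (x - ε • z))]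
    exact mul_le_mul_of_nonneg_left (hCle _) (norm_nonneg _)
  have hbint : Integrable (fun z : Fin n → ℝ => ‖φ z‖ * C) volume :=
    (φ.integrable (μ := volume)).norm.mul_const C
  have hdiff : ∀ᵐ z : Fin n → ℝ ∂volume, ∀ x ∈ Metric.ball x₀ 1,
      HasFDerivAt (fun x => φ z • g (x - ε • z)) (φ z • (fderivCLM ℝ _ _ g) (x - ε • z)) x := by
    refine Filter.Eventually.of_forall fun z => fun x _ => ?_
    have h1 : HasFDerivAt (fun x : Fin n → ℝ => x - ε • z)
        (ContinuousLinearMap.id ℝ (Fin n → ℝ)) x := (hasFDerivAt_id x).sub_const (ε • z)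
    have h2 : HasFDerivAt g (fderiv ℝ g (x - ε • z)) (x - ε • z) :=
      (schwartz_diff g (x - ε • z)).hasFDerivAt
    have h3 := h2.comp x h1
    rw [ContinuousLinearMap.comp_id] at h3
    have h4 := h3.const_smul (φ z)
    exact h4
  exact hasFDerivAt_integral_of_dominated_of_fderiv_le (Metric.ball_mem_nhds x₀ one_pos) hmeas hint hmeas' hbdd hbint hdiff

lemma contDiff_Tconv (φ : 𝓢((Fin n → ℝ), ℂ)) (ε : ℝ) (m : ℕ) :
    ∀ {E : Type} [NormedAddCommGroup E] [NormedSpace ℂ E] [CompleteSpace E]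
    (g : 𝓢((Fin n → ℝ), E)), ContDiff ℝ m (Tconv φ ε g) := by
  induction m with
  | zero =>
    intro E _ _ _ g
    have hd : Differentiable ℝ (Tconv φ ε g) :=
      fun x => (hasFDerivAt_Tconv φ g ε x).differentiableAt
    exact contDiff_zero.mpr hd.continuous
  | succ m IH =>
    intro E _ _ _ g
    have hcast : ((m + 1 : ℕ) : WithTop ℕ∞) = (m : WithTop ℕ∞) + 1 := by norm_cast
    rw [hcast, contDiff_succ_iff_fderiv]
    refine ⟨fun x => (hasFDerivAt_Tconv φ g ε x).differentiableAt, by simp, ?_⟩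
    have hfd : fderiv ℝ (Tconv φ ε g) = Tconv φ ε (fderivCLM ℝ _ _ g) :=
      funext fun x => (hasFDerivAt_Tconv φ g ε x).fderiv
    rw [hfd]
    exact IH (fderivCLM ℝ _ _ g)

lemma contDiff_Tconv_top (φ : 𝓢((Fin n → ℝ), ℂ)) (ε : ℝ) {E : Type} [NormedAddCommGroup E]
    [NormedSpace ℂ E] [CompleteSpace E] (g : 𝓢((Fin n → ℝ), E)) :
    ContDiff ℝ (⊤ : ℕ∞) (Tconv φ ε g) :=
  contDiff_infty.mpr fun m => contDiff_Tconv φ ε m g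

lemma pow_add_le_aux (k : ℕ) {a b : ℝ} (ha : 0 ≤ a) (hb : 0 ≤ b) :
    (a + b) ^ k ≤ 2 ^ k * (a ^ k + b ^ k) := by
  have h1 : a + b ≤ 2 * max a b := by
    rcases le_total a b with h | h
    · calc a + b ≤ b + b := by linarith
        _ = 2 * max a b := by rw [max_eq_right h]; ring
    · calc a + b ≤ a + a := by linarith
        _ = 2 * max a b := by rw [max_eq_left h]; ring
  calc (a + b) ^ k ≤ (2 * max a b) ^ k :=
        pow_le_pow_left₀ (by linarith) h1 k
    _ = 2 ^ k * (max a b) ^ k := mul_pow 2 _ k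
    _ ≤ 2 ^ k * (a ^ k + b ^ k) := by
        refine mul_le_mul_of_nonneg_left ?_ (by positivity)
        rcases le_total a b with h | h
        · rw [max_eq_right h]; nlinarith [pow_nonneg ha k]
        · rw [max_eq_left h]; nlinarith [pow_nonneg hb k]

/-- Vanishing of moments against the multilinear derivative terms. -/
lemma moment_zero (φ : 𝓢((Fin n → ℝ), ℂ))
    (hφmom : ∀ α : Fin n → ℕ, α ≠ 0 → ∫ x, (∏ j, (x j : ℂ) ^ α j) * φ x = 0)
    {E : Type} [NormedAddCommGroup E] [NormedSpace ℂ E] [CompleteSpace E]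
    {j : ℕ} (hj : j ≠ 0)
    (M : ContinuousMultilinearMap ℝ (fun _ : Fin j => (Fin n → ℝ)) E) :
    ∫ z : Fin n → ℝ, φ z • M (fun _ => z) = 0 := by
  classical
  set b : Fin n → (Fin n → ℝ) := fun i => fun l => if i = l then (1 : ℝ) else 0 with hb
  have hexp : ∀ z : Fin n → ℝ, M (fun _ => z) =
      ∑ r : Fin j → Fin n, (∏ k, z (r k)) • M (fun k => b (r k)) := by
    intro z
    have h0 : (fun _ : Fin j => z) = fun _ : Fin j => ∑ i : Fin n, z i • b i := by
      funext _; exact pi_eq_sum_univ z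
    calc M (fun _ : Fin j => z)
        = M.toMultilinearMap (fun _ : Fin j => ∑ i : Fin n, z i • b i) := by rw [h0]; rfl
      _ = ∑ r : Fin j → Fin n, M.toMultilinearMap (fun k => z (r k) • b (r k)) :=
          M.toMultilinearMap.map_sum (g := fun _ i => z i • b i)
      _ = ∑ r : Fin j → Fin n, (∏ k, z (r k)) • M (fun k => b (r k)) := by
          refine Finset.sum_congr rfl fun r _ => ?_
          exact M.toMultilinearMap.map_smul_univ (fun k => z (r k)) (fun k => b (r k))
  have hpt : ∀ z : Fin n → ℝ, φ z • M (fun _ => z) =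
      ∑ r : Fin j → Fin n, ((∏ k, (z (r k) : ℂ)) * φ z) • M (fun k => b (r k)) := by
    intro z
    rw [hexp z, Finset.smul_sum]
    refine Finset.sum_congr rfl fun r _ => ?_
    rw [smul_comm (φ z), ← Complex.coe_smul, smul_smul]
    congr 1
    push_cast
    ring
  have hintr : ∀ r : Fin j → Fin n,
      Integrable (fun z : Fin n → ℝ => ((∏ k, (z (r k) : ℂ)) * φ z) • M (fun k => b (r k))) := by
    intro r
    refine (((φ.integrable_pow_mul volume j).mul_const ‖M (fun k => b (r k))‖).mono' ?_ ?_)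
    · refine Continuous.aestronglyMeasurable ?_
      exact ((continuous_finset_prod _ fun k _ =>
        (Complex.continuous_ofReal.comp (continuous_apply (r k)))).mul
          φ.continuous).smul continuous_const
    · refine Filter.Eventually.of_forall fun z => ?_
      rw [norm_smul, norm_mul]
      have hzb : ‖∏ k, (z (r k) : ℂ)‖ ≤ ‖z‖ ^ j := by
        rw [norm_prod]
        calc ∏ k : Fin j, ‖(z (r k) : ℂ)‖ ≤ ∏ _k : Fin j, ‖z‖ := by
              refine Finset.prod_le_prod (fun _ _ => norm_nonneg _) fun k _ => ?_
              simpa [Complex.norm_real] using norm_le_pi_norm z (r k)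
          _ = ‖z‖ ^ j := by rw [Finset.prod_const, Finset.card_univ, Fintype.card_fin]
      calc ‖∏ k, (z (r k) : ℂ)‖ * ‖φ z‖ * ‖M fun k => b (r k)‖
          ≤ ‖z‖ ^ j * ‖φ z‖ * ‖M fun k => b (r k)‖ := by
            have := mul_le_mul_of_nonneg_right hzb (norm_nonneg (φ z))
            exact mul_le_mul_of_nonneg_right this (norm_nonneg _)
        _ = ‖z‖ ^ j * ‖φ z‖ * ‖M fun k => b (r k)‖ := rfl
  calc ∫ z : Fin n → ℝ, φ z • M (fun _ => z)
      = ∫ z : Fin n → ℝ, ∑ r : Fin j → Fin n,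
          ((∏ k, (z (r k) : ℂ)) * φ z) • M (fun k => b (r k)) := by
        exact integral_congr_ae (Filter.Eventually.of_forall hpt)
    _ = ∑ r : Fin j → Fin n, ∫ z : Fin n → ℝ,
          ((∏ k, (z (r k) : ℂ)) * φ z) • M (fun k => b (r k)) :=
        integral_finset_sum _ fun r _ => hintr r
    _ = 0 := by
        refine Finset.sum_eq_zero fun r _ => ?_
        rw [integral_smul_const]
        have hαz : ∀ z : Fin n → ℝ, (∏ k, (z (r k) : ℂ)) =
            ∏ i : Fin n, (z i : ℂ) ^ (Finset.univ.filter fun k => r k = i).card := by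
          intro z
          rw [Finset.prod_comp (fun i : Fin n => (z i : ℂ)) r]
          refine Finset.prod_subset (Finset.subset_univ _) fun i _ hi => ?_
          have : (Finset.univ.filter fun k => r k = i).card = 0 := by
            rw [Finset.card_eq_zero, Finset.filter_eq_empty_iff]
            intro k _
            intro hk
            exact hi (Finset.mem_image.mpr ⟨k, Finset.mem_univ k, hk⟩)
          rw [this, pow_zero]
        have hα : (fun i => (Finset.univ.filter fun k => r k = i).card) ≠ (0 : Fin n → ℕ) := by
          intro h0
          have hcard : (Finset.univ : Finset (Fin j)).card =
              ∑ i : Fin n, (Finset.univ.filter fun k => r k = i).card :=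
            Finset.card_eq_sum_card_fiberwise fun k _ => Finset.mem_univ (r k)
          rw [Finset.card_univ, Fintype.card_fin] at hcard
          apply hj
          rw [hcard]
          refine Finset.sum_eq_zero fun i _ => ?_
          exact congrFun h0 i
        have heq : (∫ z : Fin n → ℝ, (∏ k, (z (r k) : ℂ)) * φ z) = 0 := by
          simp_rw [hαz]
          exact hφmom _ hα
        rw [heq, zero_smul]

lemma integrable_smul_mlin (φ : 𝓢((Fin n → ℝ), ℂ)) {E : Type} [NormedAddCommGroup E]
    [NormedSpace ℂ E] {j : ℕ}
    (M : ContinuousMultilinearMap ℝ (fun _ : Fin j => (Fin n → ℝ)) E) (a : ℝ) :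
    Integrable (fun z : Fin n → ℝ => φ z • M (fun _ => a • z)) := by
  refine ((φ.integrable_pow_mul volume j).const_mul (‖M‖ * |a| ^ j)).mono' ?_ ?_
  · refine Continuous.aestronglyMeasurable ?_
    exact φ.continuous.smul (M.cont.comp (continuous_pi fun _ =>
      continuous_const_smul a))
  · refine Filter.Eventually.of_forall fun z => ?_
    rw [norm_smul]
    have h1 : ‖M (fun _ : Fin j => a • z)‖ ≤ ‖M‖ * (|a| * ‖z‖) ^ j := by
      refine (M.le_opNorm _).trans ?_
      refine mul_le_mul_of_nonneg_left ?_ (norm_nonneg M)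
      rw [Finset.prod_const, Finset.card_univ, Fintype.card_fin]
      refine pow_le_pow_left₀ (norm_nonneg _) ?_ j
      rw [norm_smul, Real.norm_eq_abs]
    calc ‖φ z‖ * ‖M (fun _ : Fin j => a • z)‖ ≤ ‖φ z‖ * (‖M‖ * (|a| * ‖z‖) ^ j) :=
          mul_le_mul_of_nonneg_left h1 (norm_nonneg _)
      _ = ‖M‖ * |a| ^ j * (‖z‖ ^ j * ‖φ z‖) := by ring
  -- where mul_pow was used implicitly

/-- Derivatives along a line. -/
lemma iteratedDeriv_line {E : Type} [NormedAddCommGroup E] [NormedSpace ℝ E]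
    {g : (Fin n → ℝ) → E} (hg : ContDiff ℝ (⊤ : ℕ∞) g) (x v : Fin n → ℝ) :
    ∀ (j : ℕ) (t : ℝ), iteratedDeriv j (fun s : ℝ => g (x + s • v)) t
      = iteratedFDeriv ℝ j g (x + t • v) (fun _ => v) := by
  intro j
  induction j with
  | zero => intro t; simp [iteratedDeriv_zero]
  | succ j IH =>
    intro t
    rw [iteratedDeriv_succ]
    have hfun : iteratedDeriv j (fun s : ℝ => g (x + s • v))
        = fun s => iteratedFDeriv ℝ j g (x + s • v) (fun _ => v) := funext IH
    rw [hfun]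
    have hline : HasDerivAt (fun s : ℝ => x + s • v) v t := by
      simpa using ((hasDerivAt_id t).smul_const v).const_add x
    have hdiff : DifferentiableAt ℝ (iteratedFDeriv ℝ j g) (x + t • v) :=
      (hg.differentiable_iteratedFDeriv (mod_cast ENat.coe_lt_top j)).differentiableAt
    have h1 : HasDerivAt (fun s : ℝ => iteratedFDeriv ℝ j g (x + s • v))
        (fderiv ℝ (iteratedFDeriv ℝ j g) (x + t • v) v) t :=
      hdiff.hasFDerivAt.comp_hasDerivAt t hline
    have h2 := ((ContinuousMultilinearMap.apply ℝ (fun _ : Fin j => (Fin n → ℝ)) E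
      (fun _ => v)).hasFDerivAt.comp_hasDerivAt t h1)
    exact h2.deriv

lemma iteratedDerivWithin_Icc {E : Type} [NormedAddCommGroup E] [NormedSpace ℝ E] {f : ℝ → E}
    (hf : ContDiff ℝ (⊤ : ℕ∞) f) (j : ℕ) {t : ℝ} (ht : t ∈ Icc (0 : ℝ) 1) :
    iteratedDerivWithin j f (Icc 0 1) t = iteratedDeriv j f t := by
  rw [iteratedDerivWithin_eq_iteratedFDerivWithin, iteratedDeriv_eq_iteratedFDeriv]
  have h := contDiff_iff_ftaylorSeries.mp hf
  have h2 := (h.hasFTaylorSeriesUpToOn (Icc (0:ℝ) 1)).eq_iteratedFDerivWithin_of_uniqueDiffOn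
    (m := j) (by exact_mod_cast le_top) (uniqueDiffOn_Icc one_pos) ht
  rw [← h2]
  rfl

lemma base (φ : 𝓢((Fin n → ℝ), ℂ)) (hφ1 : (∫ x, φ x) = 1)
    (hφmom : ∀ α : Fin n → ℕ, α ≠ 0 → ∫ x, (∏ j, (x j : ℂ) ^ α j) * φ x = 0)
    {E : Type} [NormedAddCommGroup E] [NormedSpace ℂ E] [CompleteSpace E]
    (g : 𝓢((Fin n → ℝ), E)) (k q : ℕ) :
    ∃ c : ℝ, ∀ ε ∈ Ioc (0 : ℝ) 1, ∀ x : Fin n → ℝ,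
      ‖x‖ ^ k * ‖g x - Tconv φ ε g x‖ ≤ c * ε ^ q := by
  obtain ⟨B1, hB1pos, hB1⟩ := g.decay k (q + 1)
  obtain ⟨B2, hB2pos, hB2⟩ := g.decay 0 (q + 1)
  have hB2' : ∀ y, ‖iteratedFDeriv ℝ (q + 1) g y‖ ≤ B2 := fun y => by
    simpa using hB2 y
  set A1 : ℝ := B2 + 2 ^ k * B1 with hA1
  set A2 : ℝ := 2 ^ k * B2 with hA2
  set I₁ : ℝ := ∫ z : Fin n → ℝ, ‖z‖ ^ (q + 1) * ‖φ z‖ with hI₁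
  set I₂ : ℝ := ∫ z : Fin n → ℝ, ‖z‖ ^ (q + 1 + k) * ‖φ z‖ with hI₂
  have hI₁0 : 0 ≤ I₁ := integral_nonneg fun z => by positivity
  have hI₂0 : 0 ≤ I₂ := integral_nonneg fun z => by positivity
  have hA10 : 0 ≤ A1 := by
    have h2k : (0:ℝ) ≤ 2 ^ k := by positivity
    nlinarith
  have hA20 : 0 ≤ A2 := by
    have h2k : (0:ℝ) ≤ 2 ^ k := by positivity
    nlinarith
  refine ⟨(q.factorial : ℝ)⁻¹ * (A1 * I₁ + A2 * I₂), ?_⟩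
  rintro ε ⟨hε0, hε1⟩ x
  have hgsm : ContDiff ℝ (⊤ : ℕ∞) (g : (Fin n → ℝ) → E) := g.smooth ⊤
  set N : (Fin n → ℝ) → ℝ := fun z => B2 + 2 ^ k * (B1 + ‖z‖ ^ k * B2) with hN
  have hN0 : ∀ z, 0 ≤ N z := by
    intro z
    have h2k : (0:ℝ) ≤ 2 ^ k := by positivity
    have hzk : (0:ℝ) ≤ ‖z‖ ^ k := by positivity
    simp only [hN]
    nlinarith
  set D : (Fin n → ℝ) → ℝ := fun z => N z / (1 + ‖x‖ ^ k) with hD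
  have hD0 : ∀ z, 0 ≤ D z := fun z => div_nonneg (hN0 z) (by positivity)
  -- pointwise Taylor estimate
  have main_pt : ∀ z : Fin n → ℝ,
      ‖(∑ j ∈ Finset.range (q + 1),
          ((j.factorial : ℝ)⁻¹) • iteratedFDeriv ℝ j g x (fun _ => (-ε) • z))
        - g (x - ε • z)‖ ≤ (ε * ‖z‖) ^ (q + 1) * D z / q.factorial := by
    intro z
    set v : Fin n → ℝ := (-ε) • z with hv
    have hvnorm : ‖v‖ = ε * ‖z‖ := by
      rw [hv, norm_smul, Real.norm_eq_abs, abs_neg, abs_of_pos hε0]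
    have hlinec : ContDiff ℝ (⊤ : ℕ∞) (fun s : ℝ => x + s • v) :=
      contDiff_const.add (contDiff_id.smul contDiff_const)
    have hsm : ContDiff ℝ (⊤ : ℕ∞) (fun s : ℝ => g (x + s • v)) := hgsm.comp hlinec
    have hITbound : ∀ s : ℝ, s ∈ Icc (0:ℝ) 1 →
        ‖iteratedFDeriv ℝ (q + 1) g (x + s • v)‖ ≤ D z := by
      intro s hs
      set y := x + s • v with hy
      have hxy : ‖x‖ ≤ ‖y‖ + ‖z‖ := by
        have hxval : x = y + (s * ε) • z := by
          rw [hy, hv]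
          module
        calc ‖x‖ = ‖y + (s * ε) • z‖ := by rw [← hxval]
          _ ≤ ‖y‖ + ‖(s * ε) • z‖ := norm_add_le _ _
          _ ≤ ‖y‖ + ‖z‖ := by
              rw [norm_smul, Real.norm_eq_abs]
              have habs : |s * ε| ≤ 1 := by
                rw [abs_of_nonneg (by nlinarith [hs.1] : (0:ℝ) ≤ s * ε)]
                nlinarith [hs.1, hs.2]
              nlinarith [norm_nonneg z]
      have hxk : ‖x‖ ^ k ≤ 2 ^ k * (‖y‖ ^ k + ‖z‖ ^ k) := by
        calc ‖x‖ ^ k ≤ (‖y‖ + ‖z‖) ^ k :=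
              pow_le_pow_left₀ (norm_nonneg x) hxy k
          _ ≤ 2 ^ k * (‖y‖ ^ k + ‖z‖ ^ k) := pow_add_le_aux k (norm_nonneg y) (norm_nonneg z)
      rw [hD]
      rw [le_div_iff₀ (by positivity : (0:ℝ) < 1 + ‖x‖ ^ k)]
      have e1 : ‖iteratedFDeriv ℝ (q+1) g y‖ ≤ B2 := hB2' y
      have e2 : ‖x‖ ^ k * ‖iteratedFDeriv ℝ (q+1) g y‖ ≤ 2 ^ k * (B1 + ‖z‖ ^ k * B2) := by
        have t1 : ‖y‖ ^ k * ‖iteratedFDeriv ℝ (q+1) g y‖ ≤ B1 := hB1 y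
        have t2 : ‖z‖ ^ k * ‖iteratedFDeriv ℝ (q+1) g y‖ ≤ ‖z‖ ^ k * B2 :=
          mul_le_mul_of_nonneg_left e1 (by positivity)
        have h2k : (0:ℝ) ≤ 2 ^ k := by positivity
        calc ‖x‖ ^ k * ‖iteratedFDeriv ℝ (q+1) g y‖
            ≤ (2 ^ k * (‖y‖ ^ k + ‖z‖ ^ k)) * ‖iteratedFDeriv ℝ (q+1) g y‖ :=
              mul_le_mul_of_nonneg_right hxk (norm_nonneg _)
          _ = 2 ^ k * (‖y‖ ^ k * ‖iteratedFDeriv ℝ (q+1) g y‖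
                + ‖z‖ ^ k * ‖iteratedFDeriv ℝ (q+1) g y‖) := by ring
          _ ≤ 2 ^ k * (B1 + ‖z‖ ^ k * B2) := by nlinarith
      calc ‖iteratedFDeriv ℝ (q+1) g y‖ * (1 + ‖x‖ ^ k)
          = ‖iteratedFDeriv ℝ (q+1) g y‖ + ‖x‖ ^ k * ‖iteratedFDeriv ℝ (q+1) g y‖ := by ring
        _ ≤ B2 + 2 ^ k * (B1 + ‖z‖ ^ k * B2) := add_le_add e1 e2
        _ = N z := by simp only [hN]
    have hC : ∀ s ∈ Icc (0:ℝ) 1,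
        ‖iteratedDerivWithin (q + 1) (fun s : ℝ => g (x + s • v)) (Icc 0 1) s‖
          ≤ (ε * ‖z‖) ^ (q + 1) * D z := by
      intro s hs
      rw [iteratedDerivWithin_Icc hsm (q + 1) hs,
        iteratedDeriv_line hgsm x v (q + 1) s]
      calc ‖iteratedFDeriv ℝ (q+1) g (x + s • v) (fun _ => v)‖
          ≤ ‖iteratedFDeriv ℝ (q+1) g (x + s • v)‖ * ∏ _i : Fin (q+1), ‖v‖ :=
            (iteratedFDeriv ℝ (q+1) g (x + s • v)).le_opNorm _
        _ = ‖iteratedFDeriv ℝ (q+1) g (x + s • v)‖ * (ε * ‖z‖) ^ (q+1) := by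
            rw [Finset.prod_const, Finset.card_univ, Fintype.card_fin, hvnorm]
        _ ≤ D z * (ε * ‖z‖) ^ (q+1) :=
            mul_le_mul_of_nonneg_right (hITbound s hs)
              (pow_nonneg (mul_nonneg hε0.le (norm_nonneg z)) _)
        _ = (ε * ‖z‖) ^ (q+1) * D z := by ring
    have htaylor := taylor_mean_remainder_bound (f := fun s : ℝ => g (x + s • v))
      (a := 0) (b := 1) (x := 1) (n := q) zero_le_one
      ((hsm.of_le (by exact_mod_cast (ENat.coe_lt_top (q+1)).le)).contDiffOn)
      (right_mem_Icc.mpr zero_le_one) hC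
    have hfun1 : g (x + (1:ℝ) • v) = g (x - ε • z) := by
      rw [one_smul, hv, neg_smul, ← sub_eq_add_neg]
    have htay : taylorWithinEval (fun s : ℝ => g (x + s • v)) q (Icc 0 1) 0 1
        = ∑ j ∈ Finset.range (q + 1),
          ((j.factorial : ℝ)⁻¹) • iteratedFDeriv ℝ j g x (fun _ => v) := by
      rw [taylor_within_apply]
      refine Finset.sum_congr rfl fun j hj => ?_
      rw [iteratedDerivWithin_Icc hsm j (left_mem_Icc.mpr zero_le_one),
        iteratedDeriv_line hgsm x v j 0]
      norm_num
    beta_reduce at htaylor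
    rw [hfun1, htay] at htaylor
    rw [norm_sub_rev]
    calc ‖g (x - ε • z) - ∑ j ∈ Finset.range (q + 1),
          ((j.factorial : ℝ)⁻¹) • iteratedFDeriv ℝ j g x (fun _ => v)‖
        ≤ (ε * ‖z‖) ^ (q+1) * D z * (1 - 0) ^ (q + 1) / q.factorial := htaylor
      _ = (ε * ‖z‖) ^ (q+1) * D z / q.factorial := by norm_num
  -- integral identities
  have hptw : (fun z : Fin n → ℝ => φ z • ∑ j ∈ Finset.range (q + 1),
        ((j.factorial : ℝ)⁻¹) • iteratedFDeriv ℝ j g x (fun _ => (-ε) • z))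
      = fun z => ∑ j ∈ Finset.range (q + 1),
        ((j.factorial : ℝ)⁻¹) • (φ z • iteratedFDeriv ℝ j g x (fun _ => (-ε) • z)) := by
    funext z
    rw [Finset.smul_sum]
    exact Finset.sum_congr rfl fun j _ =>
      (smul_comm ((j.factorial : ℝ)⁻¹) (φ z) _).symm
  have hPint : Integrable (fun z : Fin n → ℝ => φ z • ∑ j ∈ Finset.range (q + 1),
      ((j.factorial : ℝ)⁻¹) • iteratedFDeriv ℝ j g x (fun _ => (-ε) • z)) := by
    rw [hptw]
    exact integrable_finset_sum _ fun j _ =>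
      (integrable_smul_mlin φ (iteratedFDeriv ℝ j g x) (-ε)).smul ((j.factorial : ℝ)⁻¹)
  have hgint := integrable_Tconv φ g ε x
  have hTP : (∫ z : Fin n → ℝ, φ z • ∑ j ∈ Finset.range (q + 1),
      ((j.factorial : ℝ)⁻¹) • iteratedFDeriv ℝ j g x (fun _ => (-ε) • z)) = g x := by
    have hsum := integral_finset_sum (μ := volume) (Finset.range (q+1))
      (f := fun (j : ℕ) (z : Fin n → ℝ) =>
        ((j.factorial : ℝ)⁻¹) • (φ z • iteratedFDeriv ℝ j g x fun _ => (-ε) • z))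
      (fun j _ => (integrable_smul_mlin φ (iteratedFDeriv ℝ j g x) (-ε)).smul
        ((j.factorial : ℝ)⁻¹))
    rw [hptw, hsum, Finset.sum_eq_single 0 ?_ ?_]
    · simp only [Nat.factorial_zero, Nat.cast_one, inv_one, one_smul,
        iteratedFDeriv_zero_apply]
      rw [integral_smul_const, hφ1, one_smul]
    · intro j hj hjne
      have hmz := moment_zero φ hφmom hjne (iteratedFDeriv ℝ j g x)
      have hzz : ∀ z : Fin n → ℝ, (iteratedFDeriv ℝ j g x fun _ => (-ε) • z)
          = ((-ε : ℝ) ^ j) • iteratedFDeriv ℝ j g x (fun _ => z) := by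
        intro z
        rw [show (fun _ : Fin j => (-ε) • z)
            = fun i : Fin j => (fun _ : Fin j => (-ε : ℝ)) i • (fun _ : Fin j => z) i from rfl,
          (iteratedFDeriv ℝ j g x).map_smul_univ]
        rw [Finset.prod_const, Finset.card_univ, Fintype.card_fin]
      calc ∫ z : Fin n → ℝ, ((j.factorial : ℝ)⁻¹)
            • (φ z • iteratedFDeriv ℝ j g x fun _ => (-ε) • z)
          = ∫ z : Fin n → ℝ, ((j.factorial : ℝ)⁻¹ * (-ε) ^ j)
            • (φ z • iteratedFDeriv ℝ j g x fun _ => z) := by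
            refine integral_congr_ae (Filter.Eventually.of_forall fun z => ?_)
            beta_reduce
            rw [hzz z, smul_comm (φ z), smul_smul]
        _ = ((j.factorial : ℝ)⁻¹ * (-ε) ^ j)
            • ∫ z : Fin n → ℝ, φ z • iteratedFDeriv ℝ j g x fun _ => z := integral_smul _ _
        _ = 0 := by rw [hmz, smul_zero]
    · intro h
      exact absurd (Finset.mem_range.mpr (Nat.succ_pos q)) h
  have hid : g x - Tconv φ ε g x = ∫ z : Fin n → ℝ,
      φ z • ((∑ j ∈ Finset.range (q + 1),
        ((j.factorial : ℝ)⁻¹) • iteratedFDeriv ℝ j g x (fun _ => (-ε) • z))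
          - g (x - ε • z)) := by
    have hsub : (fun z : Fin n → ℝ => φ z • ((∑ j ∈ Finset.range (q + 1),
        ((j.factorial : ℝ)⁻¹) • iteratedFDeriv ℝ j g x (fun _ => (-ε) • z))
          - g (x - ε • z)))
        = fun z => (φ z • ∑ j ∈ Finset.range (q + 1),
            ((j.factorial : ℝ)⁻¹) • iteratedFDeriv ℝ j g x (fun _ => (-ε) • z))
          - φ z • g (x - ε • z) := by
      funext z
      rw [smul_sub]
    rw [hsub, integral_sub hPint hgint, hTP]
    rfl
  -- final estimate
  have hq0 : (0:ℝ) < q.factorial := by exact_mod_cast q.factorial_pos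
  have hbde : Integrable (fun z : Fin n → ℝ => ε ^ (q+1) * ((q.factorial : ℝ)⁻¹
      * (A1 * (‖z‖ ^ (q + 1) * ‖φ z‖) + A2 * (‖z‖ ^ (q + 1 + k) * ‖φ z‖)))) := by
    exact ((((φ.integrable_pow_mul volume (q+1)).const_mul A1).add
      ((φ.integrable_pow_mul volume (q+1+k)).const_mul A2)).const_mul
        ((q.factorial : ℝ)⁻¹)).const_mul (ε ^ (q+1))
  have hpt2 : ∀ z : Fin n → ℝ, ‖x‖ ^ k * ‖φ z • ((∑ j ∈ Finset.range (q + 1),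
      ((j.factorial : ℝ)⁻¹) • iteratedFDeriv ℝ j g x (fun _ => (-ε) • z))
        - g (x - ε • z))‖ ≤ ε ^ (q+1) * ((q.factorial : ℝ)⁻¹
      * (A1 * (‖z‖ ^ (q + 1) * ‖φ z‖) + A2 * (‖z‖ ^ (q + 1 + k) * ‖φ z‖))) := by
    intro z
    rw [norm_smul]
    have hstep1 : ‖x‖ ^ k * (‖φ z‖ * ‖(∑ j ∈ Finset.range (q + 1),
        ((j.factorial : ℝ)⁻¹) • iteratedFDeriv ℝ j g x (fun _ => (-ε) • z))
          - g (x - ε • z)‖)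
        ≤ ‖x‖ ^ k * (‖φ z‖ * ((ε * ‖z‖) ^ (q + 1) * D z / q.factorial)) := by
      refine mul_le_mul_of_nonneg_left
        (mul_le_mul_of_nonneg_left (main_pt z) (norm_nonneg _)) (by positivity)
    refine hstep1.trans ?_
    have hxD : ‖x‖ ^ k * D z ≤ N z := by
      rw [hD]
      have h1 : ‖x‖ ^ k / (1 + ‖x‖ ^ k) ≤ 1 := by
        rw [div_le_one (by positivity)]
        nlinarith [pow_nonneg (norm_nonneg x) k]
      calc ‖x‖ ^ k * (N z / (1 + ‖x‖ ^ k)) = N z * (‖x‖ ^ k / (1 + ‖x‖ ^ k)) := by ring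
        _ ≤ N z * 1 := mul_le_mul_of_nonneg_left h1 (hN0 z)
        _ = N z := mul_one _
    have hrearr : ‖x‖ ^ k * (‖φ z‖ * ((ε * ‖z‖) ^ (q + 1) * D z / q.factorial))
        = (‖φ z‖ * ((ε * ‖z‖) ^ (q + 1) / q.factorial)) * (‖x‖ ^ k * D z) := by
      ring
    rw [hrearr]
    have hcoef : (0:ℝ) ≤ ‖φ z‖ * ((ε * ‖z‖) ^ (q + 1) / q.factorial) :=
      mul_nonneg (norm_nonneg _) (div_nonneg
        (pow_nonneg (mul_nonneg hε0.le (norm_nonneg z)) _) hq0.le)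
    refine (mul_le_mul_of_nonneg_left hxD hcoef).trans (le_of_eq ?_)
    simp only [hN, hA1, hA2]
    rw [mul_pow, pow_add ‖z‖ (q+1) k]
    field_simp
    ring
  calc ‖x‖ ^ k * ‖g x - Tconv φ ε g x‖
      = ‖x‖ ^ k * ‖∫ z : Fin n → ℝ, φ z • ((∑ j ∈ Finset.range (q + 1),
          ((j.factorial : ℝ)⁻¹) • iteratedFDeriv ℝ j g x (fun _ => (-ε) • z))
            - g (x - ε • z))‖ := by rw [hid]
    _ ≤ ‖x‖ ^ k * ∫ z : Fin n → ℝ, ‖φ z • ((∑ j ∈ Finset.range (q + 1),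
          ((j.factorial : ℝ)⁻¹) • iteratedFDeriv ℝ j g x (fun _ => (-ε) • z))
            - g (x - ε • z))‖ :=
        mul_le_mul_of_nonneg_left (norm_integral_le_integral_norm _) (by positivity)
    _ = ∫ z : Fin n → ℝ, ‖x‖ ^ k * ‖φ z • ((∑ j ∈ Finset.range (q + 1),
          ((j.factorial : ℝ)⁻¹) • iteratedFDeriv ℝ j g x (fun _ => (-ε) • z))
            - g (x - ε • z))‖ := (integral_const_mul _ _).symm
    _ ≤ ∫ z : Fin n → ℝ, ε ^ (q+1) * ((q.factorial : ℝ)⁻¹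
          * (A1 * (‖z‖ ^ (q + 1) * ‖φ z‖) + A2 * (‖z‖ ^ (q + 1 + k) * ‖φ z‖))) :=
        integral_mono_of_nonneg (Filter.Eventually.of_forall fun z => by positivity)
          hbde (Filter.Eventually.of_forall hpt2)
    _ = ε ^ (q+1) * ((q.factorial : ℝ)⁻¹ * (A1 * I₁ + A2 * I₂)) := by
        rw [integral_const_mul, integral_const_mul,
          integral_add ((φ.integrable_pow_mul volume (q+1)).const_mul A1)
            ((φ.integrable_pow_mul volume (q+1+k)).const_mul A2),
          integral_const_mul, integral_const_mul]
    _ ≤ ((q.factorial : ℝ)⁻¹ * (A1 * I₁ + A2 * I₂)) * ε ^ q := by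
        have h1 : ε ^ (q+1) ≤ ε ^ q := pow_le_pow_of_le_one hε0.le hε1 (Nat.le_succ q)
        have h2 : 0 ≤ (q.factorial : ℝ)⁻¹ * (A1 * I₁ + A2 * I₂) :=
          mul_nonneg (inv_nonneg.mpr hq0.le)
            (add_nonneg (mul_nonneg hA10 hI₁0) (mul_nonneg hA20 hI₂0))
        calc ε ^ (q+1) * ((q.factorial : ℝ)⁻¹ * (A1 * I₁ + A2 * I₂))
            ≤ ε ^ q * ((q.factorial : ℝ)⁻¹ * (A1 * I₁ + A2 * I₂)) :=
              mul_le_mul_of_nonneg_right h1 h2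
          _ = ((q.factorial : ℝ)⁻¹ * (A1 * I₁ + A2 * I₂)) * ε ^ q := mul_comm _ _

lemma key (φ : 𝓢((Fin n → ℝ), ℂ)) (hφ1 : (∫ x, φ x) = 1)
    (hφmom : ∀ α : Fin n → ℕ, α ≠ 0 → ∫ x, (∏ j, (x j : ℂ) ^ α j) * φ x = 0) (K : ℕ) :
    ∀ {E : Type} [NormedAddCommGroup E] [NormedSpace ℂ E] [CompleteSpace E]
      (g : 𝓢((Fin n → ℝ), E)) (k q : ℕ),
      ∃ c : ℝ, ∀ ε ∈ Ioc (0:ℝ) 1, ∀ x : Fin n → ℝ,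
        ‖x‖ ^ k * ‖iteratedFDeriv ℝ K (fun y => g y - Tconv φ ε g y) x‖ ≤ c * ε ^ q := by
  induction K with
  | zero =>
    intro E _ _ _ g k q
    obtain ⟨c, hc⟩ := base φ hφ1 hφmom g k q
    refine ⟨c, fun ε hε x => ?_⟩
    simpa [norm_iteratedFDeriv_zero] using hc ε hε x
  | succ K IH =>
    intro E _ _ _ g k q
    obtain ⟨c, hc⟩ := IH (fderivCLM ℝ _ _ g) k q
    refine ⟨c, fun ε hε x => ?_⟩
    have hw : fderiv ℝ (fun y => g y - Tconv φ ε g y)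
        = fun y => (fderivCLM ℝ _ _ g) y - Tconv φ ε (fderivCLM ℝ _ _ g) y := by
      funext y
      refine HasFDerivAt.fderiv ?_
      have h1 := ((schwartz_diff g y).hasFDerivAt).sub (hasFDerivAt_Tconv φ g ε y)
      exact h1
    rw [← norm_iteratedFDeriv_fderiv, hw]
    exact hc ε hε x

lemma conv_eq (f φ : 𝓢((Fin n → ℝ), ℂ)) {ε : ℝ} (hε : 0 < ε) (x : Fin n → ℝ) :
    (∫ y, f (x - y) * (((ε⁻¹ ^ n : ℝ) : ℂ) * φ (ε⁻¹ • y))) = Tconv φ ε f x := by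
  have hfr : Module.finrank ℝ (Fin n → ℝ) = n := by
    simp [Module.finrank_pi]
  have h := MeasureTheory.Measure.integral_comp_smul (μ := volume)
    (fun y : Fin n → ℝ => f (x - y) * (((ε⁻¹ ^ n : ℝ) : ℂ) * φ (ε⁻¹ • y))) ε
  rw [hfr, abs_of_pos (inv_pos.mpr (pow_pos hε n))] at h
  calc (∫ y, f (x - y) * (((ε⁻¹ ^ n : ℝ) : ℂ) * φ (ε⁻¹ • y)))
      = (ε ^ n : ℝ) • ((ε ^ n : ℝ)⁻¹
          • ∫ y, f (x - y) * (((ε⁻¹ ^ n : ℝ) : ℂ) * φ (ε⁻¹ • y))) := by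
        rw [smul_smul, mul_inv_cancel₀ (by positivity : (ε:ℝ) ^ n ≠ 0), one_smul]
    _ = (ε ^ n : ℝ) • ∫ z : Fin n → ℝ,
          (fun y : Fin n → ℝ => f (x - y) * (((ε⁻¹ ^ n : ℝ) : ℂ) * φ (ε⁻¹ • y))) (ε • z) := by
        rw [← h]
    _ = ∫ z : Fin n → ℝ, (ε ^ n : ℝ) •
          ((fun y : Fin n → ℝ => f (x - y) * (((ε⁻¹ ^ n : ℝ) : ℂ) * φ (ε⁻¹ • y))) (ε • z)) := by
        rw [← integral_smul]
    _ = ∫ z : Fin n → ℝ, φ z • f (x - ε • z) := by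
        refine integral_congr_ae (Filter.Eventually.of_forall fun z => ?_)
        beta_reduce
        have hzz : ε⁻¹ • ε • z = z := by
          rw [smul_smul, inv_mul_cancel₀ hε.ne', one_smul]
        rw [hzz]
        have hcan : ((ε ^ n : ℝ) : ℂ) * ((ε⁻¹ ^ n : ℝ) : ℂ) = 1 := by
          rw [← Complex.ofReal_mul, ← mul_pow, mul_inv_cancel₀ hε.ne', one_pow,
            Complex.ofReal_one]
        rw [Complex.real_smul, smul_eq_mul]
        linear_combination (f (x - ε • z) * φ z) * hcan
    _ = Tconv φ ε f x := rfl

end Stmt3Aux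

/-- For `f` Schwartz and `φ` a mollifier (all higher moments vanish),
the net `(f − f∗φ_ε)_ε` is negligible of Schwartz type. -/
theorem stmt3 {n : ℕ} (f φ : SchwartzMap (Fin n → ℝ) ℂ)
    (hφ1 : ∫ x, φ x = 1)
    (hφmom : ∀ α : Fin n → ℕ, α ≠ 0 → ∫ x, (∏ j, (x j : ℂ) ^ α j) * φ x = 0) :
    NegligibleS (fun ε x =>
      f x - ∫ y, f (x - y) * (((ε⁻¹ ^ n : ℝ) : ℂ) * φ (ε⁻¹ • y))) := by
  have huε : ∀ ε : ℝ, 0 < ε →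
      (fun x => f x - ∫ y, f (x - y) * (((ε⁻¹ ^ n : ℝ) : ℂ) * φ (ε⁻¹ • y)))
        = fun x => f x - Stmt3Aux.Tconv φ ε f x := by
    intro ε hε
    funext x
    rw [Stmt3Aux.conv_eq f φ hε x]
  constructor
  · intro ε hε
    have h := huε ε hε.1
    have hsm : ContDiff ℝ (⊤ : ℕ∞) (fun x => f x - Stmt3Aux.Tconv φ ε f x) :=
      (f.smooth ⊤).sub (Stmt3Aux.contDiff_Tconv_top φ ε f)
    show ContDiff ℝ (⊤ : ℕ∞)
      (fun x => f x - ∫ y, f (x - y) * (((ε⁻¹ ^ n : ℝ) : ℂ) * φ (ε⁻¹ • y)))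
    rw [h]
    exact hsm
  · intro k K q
    obtain ⟨c, hc⟩ := Stmt3Aux.key φ hφ1 hφmom K f k q
    refine ⟨c, fun ε hε x => ?_⟩
    have h := huε ε hε.1
    show ‖x‖ ^ k * ‖iteratedFDeriv ℝ K
      (fun x => f x - ∫ y, f (x - y) * (((ε⁻¹ ^ n : ℝ) : ℂ) * φ (ε⁻¹ • y))) x‖ ≤ c * ε ^ q
    rw [h]
    exact hc ε hε x
end

section
/- Let w ∈ 𝒮'(ℝⁿ) be a tempered distribution and φ a mollifier with φ̂(0) = 1. Suppose there exists N ∈ ℕ such that for all m ∈ ℕ the estimate ‖|ξ|^{2m} ŵ·φ̂(ε·)‖_{L^∞(ℝⁿ)} ≤ c_m ε^{-N} holds for all ε ∈ (0,1], where ŵ is a continuous function. Then for every m ∈ ℕ, ‖|ξ|^{2m} ŵ‖_{L^∞(ℝⁿ)} < ∞. -/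
/-!
Since `Φ(0) = 1`, `‖Φ‖ ≥ 1/2` on a ball of radius `r`. Taking `ε = r / ‖ξ‖` (or `ε = 1` when
`‖ξ‖ ≤ r`) puts `εξ` in that ball, so the hypothesis bounds `‖ξ‖^k ‖W ξ‖` by a multiple of
`max 1 ‖ξ‖ ^ N`. The polynomial loss is absorbed by applying this with `k = 2m + 2N`.
-/

open Set Filter Topology

theorem exists_radius_half_le_norm {E F : Type*} [SeminormedAddCommGroup E]
    [SeminormedAddCommGroup F] {g : E → F} (hg : ContinuousAt g 0) (hg0 : ‖g 0‖ = 1) :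
    ∃ r, 0 < r ∧ r ≤ 1 ∧ ∀ x, ‖x‖ ≤ r → 1 / 2 ≤ ‖g x‖ := by
  have hnear : ∀ᶠ x in 𝓝 0, 1 / 2 < ‖g x‖ :=
    hg.norm.eventually (lt_mem_nhds (show 1 / 2 < ‖g 0‖ by rw [hg0]; norm_num))
  obtain ⟨δ, hδ, hball⟩ := Metric.eventually_nhds_iff.mp hnear
  refine ⟨min (δ / 2) 1, by positivity, min_le_right _ _, fun x hx => (hball ?_).le⟩
  rw [dist_zero_right]
  linarith [min_le_left (δ / 2) 1]

theorem norm_pow_mul_norm_le_of_mollified_bound {E F : Type*} [NormedAddCommGroup E]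
    [NormedSpace ℝ E] [NormedDivisionRing F] {f g : E → F} {r c : ℝ} {k N : ℕ}
    (hr : 0 < r) (hr1 : r ≤ 1) (hg : ∀ x, ‖x‖ ≤ r → 1 / 2 ≤ ‖g x‖)
    (hbound : ∀ ε ∈ Ioc (0 : ℝ) 1, ∀ ξ, ‖ξ‖ ^ k * ‖f ξ * g (ε • ξ)‖ ≤ c * ε⁻¹ ^ N) (ξ : E) :
    ‖ξ‖ ^ k * ‖f ξ‖ ≤ 2 * c * r⁻¹ ^ N * max 1 ‖ξ‖ ^ N := by
  have hc : 0 ≤ c := by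
    have h := hbound 1 ⟨one_pos, le_rfl⟩ 0
    rw [inv_one, one_pow, mul_one] at h
    exact le_trans (by positivity) h
  have hrescaled : ∀ ε ∈ Ioc (0 : ℝ) 1, ‖ε • ξ‖ ≤ r → ε⁻¹ ≤ max 1 ‖ξ‖ / r →
      ‖ξ‖ ^ k * ‖f ξ‖ ≤ 2 * c * r⁻¹ ^ N * max 1 ‖ξ‖ ^ N := by
    intro ε hε hsmall hinv
    have hgε := hg _ hsmall
    calc ‖ξ‖ ^ k * ‖f ξ‖ ≤ 2 * (‖ξ‖ ^ k * ‖f ξ * g (ε • ξ)‖) := by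
          rw [norm_mul]; nlinarith [mul_nonneg (pow_nonneg (norm_nonneg ξ) k) (norm_nonneg (f ξ))]
      _ ≤ 2 * (c * ε⁻¹ ^ N) := mul_le_mul_of_nonneg_left (hbound ε hε ξ) two_pos.le
      _ ≤ 2 * c * (max 1 ‖ξ‖ / r) ^ N := by
          rw [← mul_assoc]; gcongr; exact inv_nonneg.mpr hε.1.le
      _ = 2 * c * r⁻¹ ^ N * max 1 ‖ξ‖ ^ N := by ring
  rcases le_or_gt ‖ξ‖ r with hξ | hξ
  · refine hrescaled 1 ⟨one_pos, le_rfl⟩ (by simpa using hξ) ?_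
    rw [inv_one, one_le_div hr]
    exact hr1.trans (le_max_left _ _)
  · have hξ0 : 0 < ‖ξ‖ := hr.trans hξ
    refine hrescaled (r / ‖ξ‖) ⟨by positivity, (div_le_one hξ0).mpr hξ.le⟩ ?_ ?_
    · rw [norm_smul, Real.norm_of_nonneg (by positivity), div_mul_cancel₀ _ hξ0.ne']
    · rw [inv_div]; gcongr; exact le_max_right _ _

theorem le_max_of_le_mul_max_one_pow {a t C D : ℝ} {M N : ℕ} (hNM : N ≤ M) (ha : 0 ≤ a)
    (hC : a ≤ C * max 1 t ^ N) (hD : t ^ M * a ≤ D * max 1 t ^ N) :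
    a ≤ max C D := by
  rcases le_total t 1 with ht1 | ht1
  · simpa [max_eq_left ht1] using hC.trans (le_max_left _ _)
  · rw [max_eq_right ht1] at hD
    have htN : 0 < t ^ N := by positivity
    have hsplit : t ^ M = t ^ (M - N) * t ^ N := by rw [← pow_add, Nat.sub_add_cancel hNM]
    have hD' : t ^ (M - N) * a ≤ D :=
      le_of_mul_le_mul_right (by rwa [hsplit, mul_right_comm] at hD) htN
    calc a ≤ t ^ (M - N) * a := le_mul_of_one_le_left ha (one_le_pow₀ ht1)
      _ ≤ D := hD'
      _ ≤ max C D := le_max_right _ _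

theorem stmt5_general {n N : ℕ} (W : (Fin n → ℝ) → ℂ)
    (Φ : SchwartzMap (Fin n → ℝ) ℂ) (hΦ0 : Φ 0 = 1)
    (hbound : ∀ m : ℕ, ∃ c : ℝ, ∀ ε ∈ Set.Ioc (0 : ℝ) 1, ∀ ξ,
      ‖ξ‖ ^ (2 * m) * ‖W ξ * Φ (ε • ξ)‖ ≤ c * ε⁻¹ ^ N) :
    ∀ m : ℕ, ∃ C : ℝ, ∀ ξ, ‖ξ‖ ^ (2 * m) * ‖W ξ‖ ≤ C := by
  intro m
  obtain ⟨r, hr, hr1, hΦr⟩ :=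
    exists_radius_half_le_norm Φ.continuous.continuousAt (by rw [hΦ0, norm_one])
  obtain ⟨c₁, hc₁⟩ := hbound m
  obtain ⟨c₂, hc₂⟩ := hbound (m + N)
  refine ⟨max (2 * c₁ * r⁻¹ ^ N) (2 * c₂ * r⁻¹ ^ N), fun ξ => ?_⟩
  have hD : ‖ξ‖ ^ (2 * N) * (‖ξ‖ ^ (2 * m) * ‖W ξ‖) ≤ 2 * c₂ * r⁻¹ ^ N * max 1 ‖ξ‖ ^ N := by
    convert norm_pow_mul_norm_le_of_mollified_bound hr hr1 hΦr hc₂ ξ using 1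
    ring
  exact le_max_of_le_mul_max_one_pow (by omega) (by positivity)
    (norm_pow_mul_norm_le_of_mollified_bound hr hr1 hΦr hc₁ ξ) hD

/-- If `‖ξ‖^{2m} |ŵ(ξ) φ̂(εξ)| ≤ c_m ε^{-N}` uniformly for `ε ∈ (0,1]`, with `φ̂ ∈ 𝒮`,
`φ̂(0) = 1` and `ŵ` continuous, then `‖ξ‖^{2m} |ŵ(ξ)|` is bounded for every `m`. -/
theorem stmt5 {n N : ℕ} (W : (Fin n → ℝ) → ℂ) (hW : Continuous W)
    (Φ : SchwartzMap (Fin n → ℝ) ℂ) (hΦ0 : Φ 0 = 1)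
    (hbound : ∀ m : ℕ, ∃ c : ℝ, ∀ ε ∈ Set.Ioc (0 : ℝ) 1, ∀ ξ,
      ‖ξ‖ ^ (2 * m) * ‖W ξ * Φ (ε • ξ)‖ ≤ c * ε⁻¹ ^ N) :
    ∀ m : ℕ, ∃ C : ℝ, ∀ ξ, ‖ξ‖ ^ (2 * m) * ‖W ξ‖ ≤ C :=
  stmt5_general W Φ hΦ0 hbound
end

section
/- (Existence of asymptotic sums, Borel-type argument) Let Σ_{j=0}^∞ (a_{j,ε})_ε be a formal series with (a_{j,ε})_ε ∈ 𝒮^{m_j}_{Λ,ρ,N} for all j, where m_0 = m, the sequence m_j is strictly decreasing to −∞. Then there exists (a_ε)_ε ∈ 𝒮^m_{Λ,ρ,N} such that for every r ≥ 1, (a_ε − Σ_{j=0}^{r−1} a_{j,ε})_ε ∈ 𝒮^{m_r}_{Λ,ρ,N}. Moreover if (a'_ε)_ε is another net with this property, then (a_ε − a'_ε)_ε ∈ ⋂_{m∈ℝ} 𝒮^m_{Λ,ρ,N}. -/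
open Set

/-- The symbol class `𝒮^m_{Λ,ρ,N}`. -/
def SC {n : ℕ} (Λ : (Fin (2 * n) → ℝ) → ℝ) (ρ : ℝ) (N : ℕ) (m : ℝ)
    (a : ℝ → (Fin (2 * n) → ℝ) → ℂ) : Prop :=
  (∀ ε ∈ Set.Ioc (0 : ℝ) 1, ContDiff ℝ (⊤ : ℕ∞) (a ε)) ∧
  ∀ k : ℕ, ∃ c : ℝ, ∀ ε ∈ Set.Ioc (0 : ℝ) 1, ∀ z,
    ‖iteratedFDeriv ℝ k (a ε) z‖ ≤ c * Λ z ^ (m - ρ * (k : ℝ)) * ε⁻¹ ^ N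



open Set Filter

section helpers

variable {V F : Type*} [NormedAddCommGroup V] [NormedSpace ℝ V]
  [NormedAddCommGroup F] [NormedSpace ℝ F]

lemma iteratedFDeriv_congr_nhds {f g : V → F} {x : V} (h : f =ᶠ[nhds x] g) (k : ℕ) :
    iteratedFDeriv ℝ k f x = iteratedFDeriv ℝ k g x := by
  simp only [← iteratedFDerivWithin_univ]
  exact Filter.EventuallyEq.iteratedFDerivWithin_eq (by rwa [nhdsWithin_univ]) h.self_of_nhds k

lemma iteratedFDeriv_eventually_const {f : V → F} {x : V} {c : F}
    (h : f =ᶠ[nhds x] fun _ => c) {k : ℕ} (hk : k ≠ 0) :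
    iteratedFDeriv ℝ k f x = 0 := by
  rw [iteratedFDeriv_congr_nhds h k, iteratedFDeriv_const_of_ne hk]
  rfl

lemma exists_bound_forall_le {P : ℕ → ℝ → Prop}
    (mono : ∀ i (c c' : ℝ), c ≤ c' → P i c → P i c')
    (h : ∀ i, ∃ C, P i C) (k : ℕ) : ∃ C : ℝ, 1 ≤ C ∧ ∀ i ≤ k, P i C := by
  choose B hB using h
  refine ⟨1 + ∑ i ∈ Finset.range (k + 1), |B i|, le_add_of_nonneg_right (by positivity), ?_⟩
  intro i hi
  refine mono i (B i) _ ?_ (hB i)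
  calc B i ≤ |B i| := le_abs_self _
    _ ≤ ∑ i ∈ Finset.range (k + 1), |B i| :=
        Finset.single_le_sum (fun j _ => abs_nonneg (B j)) (Finset.mem_range.2 (by omega))
    _ ≤ _ := by linarith

end helpers

/-- smooth cutoff: 0 for x ≤ 1, 1 for x ≥ 2 -/
noncomputable def psi (x : ℝ) : ℝ := Real.smoothTransition (x - 1)

lemma psi_contDiff : ContDiff ℝ (⊤ : ℕ∞) psi :=
  Real.smoothTransition.contDiff.comp (contDiff_id.sub contDiff_const)

lemma psi_nonneg (x : ℝ) : 0 ≤ psi x := Real.smoothTransition.nonneg _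
lemma psi_le_one (x : ℝ) : psi x ≤ 1 := Real.smoothTransition.le_one _
lemma psi_zero {x : ℝ} (h : x ≤ 1) : psi x = 0 :=
  Real.smoothTransition.zero_of_nonpos (by linarith)
lemma psi_one {x : ℝ} (h : 2 ≤ x) : psi x = 1 :=
  Real.smoothTransition.one_of_one_le (by linarith)

lemma psi_deriv_bound (k : ℕ) :
    ∃ C : ℝ, 1 ≤ C ∧ ∀ i ≤ k, ∀ x : ℝ, ‖iteratedFDeriv ℝ i psi x‖ ≤ C := by
  refine exists_bound_forall_le (fun i c c' hcc h => fun x => (h x).trans hcc) (fun i => ?_) k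
  rcases Nat.eq_zero_or_pos i with hi | hi
  · subst hi
    exact ⟨1, fun x => by
      rw [norm_iteratedFDeriv_zero, Real.norm_of_nonneg (psi_nonneg x)]
      exact psi_le_one x⟩
  · have hcont : Continuous fun x : ℝ => ‖iteratedFDeriv ℝ i psi x‖ :=
      (psi_contDiff.continuous_iteratedFDeriv (by exact_mod_cast le_top)).norm
    have hsupp : HasCompactSupport fun x : ℝ => ‖iteratedFDeriv ℝ i psi x‖ := by
      apply HasCompactSupport.intro (isCompact_Icc (a := (1:ℝ)) (b := 2))
      intro x hx
      simp only [mem_Icc, not_and_or, not_le] at hx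
      have : iteratedFDeriv ℝ i psi x = 0 := by
        rcases hx with hx | hx
        · refine iteratedFDeriv_eventually_const (c := (0:ℝ)) ?_ (by omega)
          filter_upwards [Filter.Tendsto.eventually_lt_const hx (f := id) Filter.tendsto_id] with y hy
          exact psi_zero (le_of_lt hy)
        · refine iteratedFDeriv_eventually_const (c := (1:ℝ)) ?_ (by omega)
          filter_upwards [Filter.Tendsto.eventually_const_lt hx (f := id) Filter.tendsto_id] with y hy
          exact psi_one (le_of_lt hy)
      simp [this]
    obtain ⟨C, hC⟩ := hcont.bounded_above_of_compact_support hsupp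
    exact ⟨C, fun x => by simpa using hC x⟩

lemma iteratedFDeriv_sub_apply2 {V F : Type*} [NormedAddCommGroup V] [NormedSpace ℝ V]
    [NormedAddCommGroup F] [NormedSpace ℝ F] {f g : V → F} {k : ℕ} {x : V}
    (hf : ContDiff ℝ (k:ℕ∞) f) (hg : ContDiff ℝ (k:ℕ∞) g) :
    iteratedFDeriv ℝ k (fun z => f z - g z) x =
      iteratedFDeriv ℝ k f x - iteratedFDeriv ℝ k g x := by
  have h1 : (fun z => f z - g z) = fun z => f z + (fun w => -g w) z := by
    funext z; simp [sub_eq_add_neg]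
  rw [h1, iteratedFDeriv_add_apply' hf.contDiffAt hg.neg.contDiffAt]
  have h2 : iteratedFDeriv ℝ k (fun w => -g w) x = -iteratedFDeriv ℝ k g x :=
    iteratedFDeriv_neg_apply
  rw [h2, ← sub_eq_add_neg]


section chi

variable {V : Type*} [NormedAddCommGroup V] [NormedSpace ℝ V]

lemma chi_contDiff {Λ : V → ℝ} (hΛsm : ContDiff ℝ (⊤ : ℕ∞) Λ) (l : ℝ) :
    ContDiff ℝ (⊤ : ℕ∞) (fun z => psi (l * Λ z)) :=
  psi_contDiff.comp ((contDiff_const (c := l)).mul hΛsm)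

set_option maxHeartbeats 1000000 in
lemma chi_deriv_bound {Λ : V → ℝ} (hpos : ∀ z, 0 < Λ z) (hΛsm : ContDiff ℝ (⊤ : ℕ∞) Λ)
    (cΛ : ℕ → ℝ) (hcΛ0 : ∀ p, 0 ≤ cΛ p)
    (hcΛ : ∀ p z, ‖iteratedFDeriv ℝ p Λ z‖ ≤ cΛ p * Λ z ^ ((1 : ℝ) - (p : ℝ)))
    {ρ : ℝ} (hρ0 : 0 < ρ) (hρ1 : ρ ≤ 1) (k : ℕ) :
    ∃ C : ℝ, 1 ≤ C ∧ ∀ l ∈ Set.Ioc (0:ℝ) 1, ∀ z, ∀ i ≤ k,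
      ‖iteratedFDeriv ℝ i (fun z => psi (l * Λ z)) z‖ ≤ C * Λ z ^ (-(ρ * (i : ℝ))) := by
  obtain ⟨Cψ, hCψ1, hCψ⟩ := psi_deriv_bound k
  set K : ℝ := 1 + ∑ p ∈ Finset.range (k + 1), 2 * |cΛ p| with hK
  have hK1 : 1 ≤ K := le_add_of_nonneg_right (by positivity)
  have hKp : ∀ p ≤ k, 2 * cΛ p ≤ K := by
    intro p hp
    have h1 : 2 * cΛ p ≤ 2 * |cΛ p| := by
      have := le_abs_self (cΛ p); linarith
    have h2 : 2 * |cΛ p| ≤ ∑ q ∈ Finset.range (k + 1), 2 * |cΛ q| :=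
      Finset.single_le_sum (f := fun q => 2 * |cΛ q|) (fun q _ => by positivity)
        (Finset.mem_range.2 (by omega))
    linarith
  refine ⟨(k.factorial : ℝ) * Cψ * K ^ k, ?_, ?_⟩
  · have h1 : (1:ℝ) ≤ (k.factorial : ℝ) := by exact_mod_cast Nat.one_le_iff_ne_zero.2 (Nat.factorial_ne_zero k)
    have h2 : (1:ℝ) ≤ K ^ k := one_le_pow₀ hK1
    have h3 : (1:ℝ) * 1 ≤ ((k.factorial : ℝ) * Cψ) * K ^ k :=
      mul_le_mul (by nlinarith) h2 zero_le_one (by nlinarith)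
    linarith
  intro l hl z i hik
  have hΛz := hpos z
  have hRHSfac : (0:ℝ) < Λ z ^ (-(ρ * (i:ℝ))) := Real.rpow_pos_of_pos hΛz _
  have hCpos : (0:ℝ) ≤ (k.factorial : ℝ) * Cψ * K ^ k := by positivity
  rcases Nat.eq_zero_or_pos i with hi0 | hi1
  · subst hi0
    simp only [Nat.cast_zero, mul_zero, neg_zero, Real.rpow_zero, mul_one,
      norm_iteratedFDeriv_zero]
    have : ‖psi (l * Λ z)‖ ≤ 1 := by
      rw [Real.norm_of_nonneg (psi_nonneg _)]; exact psi_le_one _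
    refine this.trans ?_
    have h2 : (1:ℝ) ≤ K ^ k := one_le_pow₀ hK1
    have h1 : (1:ℝ) ≤ (k.factorial : ℝ) := by exact_mod_cast Nat.one_le_iff_ne_zero.2 (Nat.factorial_ne_zero k)
    have h3 : (1:ℝ) * 1 ≤ ((k.factorial : ℝ) * Cψ) * K ^ k :=
      mul_le_mul (by nlinarith) h2 zero_le_one (by nlinarith)
    linarith
  rcases lt_or_ge (l * Λ z) 1 with hsmall | hbig1
  · have hev : (fun z => psi (l * Λ z)) =ᶠ[nhds z] (fun _ => (0:ℝ)) := by
      have hopen : IsOpen {w : V | l * Λ w < 1} :=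
        isOpen_lt (continuous_const.mul hΛsm.continuous) continuous_const
      filter_upwards [hopen.mem_nhds hsmall] with w hw
      exact psi_zero (le_of_lt hw)
    rw [iteratedFDeriv_congr_nhds hev, iteratedFDeriv_zero_fun]
    simp only [Pi.zero_apply, norm_zero]
    positivity
  rcases lt_or_ge 2 (l * Λ z) with hbig2 | hmid
  · have hev : (fun z => psi (l * Λ z)) =ᶠ[nhds z] (fun _ => (1:ℝ)) := by
      have hopen : IsOpen {w : V | 2 < l * Λ w} :=
        isOpen_lt continuous_const (continuous_const.mul hΛsm.continuous)
      filter_upwards [hopen.mem_nhds hbig2] with w hw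
      exact psi_one (le_of_lt hw)
    rw [iteratedFDeriv_eventually_const hev (by omega)]
    simp only [norm_zero]
    positivity
  -- middle case : 1 ≤ l * Λ z ≤ 2
  · have hl0 := hl.1
    have hΛ1 : (1:ℝ) ≤ Λ z := by
      have : l * Λ z ≤ 1 * Λ z := by
        have := hl.2; nlinarith
      nlinarith [hbig1]
    have hXpos : (0:ℝ) < Λ z ^ (-ρ) := Real.rpow_pos_of_pos hΛz _
    have key : ‖iteratedFDeriv ℝ i (psi ∘ fun w => l * Λ w) z‖ ≤
        (i.factorial : ℝ) * Cψ * (K * Λ z ^ (-ρ)) ^ i := by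
      refine norm_iteratedFDeriv_comp_le (C := Cψ) (D := K * Λ z ^ (-ρ)) psi_contDiff
        ((contDiff_const (c := l)).mul hΛsm) (by exact_mod_cast le_top) z ?_ ?_
      · intro p hp
        exact hCψ p (hp.trans hik) _
      · intro p hp1 hpi
        have heq : iteratedFDeriv ℝ p (fun w => l * Λ w) z = l • iteratedFDeriv ℝ p Λ z := by
          have hfun : (fun w => l * Λ w) = fun w => l • Λ w := by
            funext w; simp [smul_eq_mul]
          rw [hfun]
          exact iteratedFDeriv_const_smul_apply' (hΛsm.contDiffAt.of_le (by exact_mod_cast le_top))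
        rw [heq, norm_smul l (iteratedFDeriv ℝ p Λ z), Real.norm_of_nonneg (le_of_lt hl0)]
        have hsplit : Λ z ^ ((1:ℝ) - (p:ℝ)) = Λ z * Λ z ^ (-(p:ℝ)) := by
          rw [sub_eq_add_neg, Real.rpow_add hΛz, Real.rpow_one]
        have hnp : (0:ℝ) < Λ z ^ (-(p:ℝ)) := Real.rpow_pos_of_pos hΛz _
        have h1 : l * ‖iteratedFDeriv ℝ p Λ z‖ ≤ 2 * cΛ p * Λ z ^ (-(p:ℝ)) := by
          have hb := hcΛ p z
          have h2 : l * ‖iteratedFDeriv ℝ p Λ z‖ ≤ l * (cΛ p * Λ z ^ ((1:ℝ) - (p:ℝ))) := by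
            nlinarith [norm_nonneg (iteratedFDeriv ℝ p Λ z)]
          refine h2.trans ?_
          rw [hsplit]
          have : l * (cΛ p * (Λ z * Λ z ^ (-(p:ℝ)))) = (l * Λ z) * (cΛ p * Λ z ^ (-(p:ℝ))) := by
            ring
          rw [this]
          nlinarith [hcΛ0 p, mul_nonneg (hcΛ0 p) hnp.le]
        refine h1.trans ?_
        have hpow : (K * Λ z ^ (-ρ)) ^ p = K ^ p * Λ z ^ (-ρ * (p:ℝ)) := by
          rw [mul_pow, ← Real.rpow_natCast (Λ z ^ (-ρ)) p, ← Real.rpow_mul hΛz.le]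
        rw [hpow]
        have hKP : 2 * cΛ p ≤ K ^ p :=
          (hKp p (hpi.trans hik)).trans (le_self_pow₀ hK1 (by omega))
        have hexp : Λ z ^ (-(p:ℝ)) ≤ Λ z ^ (-ρ * (p:ℝ)) := by
          apply Real.rpow_le_rpow_of_exponent_le hΛ1
          nlinarith [Nat.cast_nonneg (α := ℝ) p]
        have hKpow_pos : (0:ℝ) < K ^ p := by positivity
        calc 2 * cΛ p * Λ z ^ (-(p:ℝ)) ≤ K ^ p * Λ z ^ (-(p:ℝ)) := by
              nlinarith
          _ ≤ K ^ p * Λ z ^ (-ρ * (p:ℝ)) := by nlinarith [Real.rpow_pos_of_pos hΛz (-ρ * (p:ℝ))]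
    have hcomp : (psi ∘ fun w => l * Λ w) = fun w => psi (l * Λ w) := rfl
    rw [hcomp] at key
    refine key.trans ?_
    have hpow : (K * Λ z ^ (-ρ)) ^ i = K ^ i * Λ z ^ (-ρ * (i:ℝ)) := by
      rw [mul_pow, ← Real.rpow_natCast (Λ z ^ (-ρ)) i, ← Real.rpow_mul hΛz.le]
    rw [hpow]
    have hfac : (i.factorial : ℝ) ≤ (k.factorial : ℝ) := by
      exact_mod_cast Nat.factorial_le hik
    have hKik : K ^ i ≤ K ^ k := pow_le_pow_right₀ hK1 hik
    have hXi : (0:ℝ) < Λ z ^ (-ρ * (i:ℝ)) := Real.rpow_pos_of_pos hΛz _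
    have hfe : -ρ * (i:ℝ) = -(ρ * (i:ℝ)) := by ring
    rw [hfe] at hXi ⊢
    have hCψ0 : (0:ℝ) ≤ Cψ := by linarith
    have h1 : (i.factorial : ℝ) * Cψ ≤ (k.factorial : ℝ) * Cψ := by nlinarith
    have h2 : (i.factorial : ℝ) * Cψ * K ^ i ≤ (k.factorial : ℝ) * Cψ * K ^ k := by
      have hifac : (0:ℝ) ≤ (i.factorial : ℝ) * Cψ := by positivity
      have hKi0 : (0:ℝ) ≤ K ^ i := by positivity
      exact mul_le_mul h1 hKik hKi0 (by positivity)
    have := mul_le_mul_of_nonneg_right h2 hXi.le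
    linarith [this]

end chi


section main

open Set Filter

set_option maxHeartbeats 1600000 in
/-- Existence and essential uniqueness of asymptotic sums of formal series of symbols. -/
theorem stmt9 {n : ℕ} (Λ : (Fin (2 * n) → ℝ) → ℝ) (hpos : ∀ z, 0 < Λ z)
    (hΛsm : ContDiff ℝ (⊤ : ℕ∞) Λ)
    (μ c₀ : ℝ) (hμ : 0 < μ) (hc₀ : 0 < c₀) (hlow : ∀ z, c₀ * jap z ^ μ ≤ Λ z)
    (hΛder : ∀ k : ℕ, ∃ c : ℝ, ∀ z, ‖iteratedFDeriv ℝ k Λ z‖ ≤ c * Λ z ^ ((1 : ℝ) - (k : ℝ)))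
    (ρ : ℝ) (hρ : ρ ∈ Set.Ioc (0 : ℝ) 1) (N : ℕ)
    (m : ℕ → ℝ) (hmono : StrictAnti m) (hlim : Filter.Tendsto m Filter.atTop Filter.atBot)
    (aj : ℕ → ℝ → (Fin (2 * n) → ℝ) → ℂ) (haj : ∀ j, SC Λ ρ N (m j) (aj j)) :
    ∃ a : ℝ → (Fin (2 * n) → ℝ) → ℂ, SC Λ ρ N (m 0) a ∧
      (∀ r : ℕ, 1 ≤ r →
        SC Λ ρ N (m r) (fun ε z => a ε z - ∑ j ∈ Finset.range r, aj j ε z)) ∧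
      (∀ a' : ℝ → (Fin (2 * n) → ℝ) → ℂ,
        (∀ r : ℕ, 1 ≤ r →
          SC Λ ρ N (m r) (fun ε z => a' ε z - ∑ j ∈ Finset.range r, aj j ε z)) →
        ∀ m' : ℝ, SC Λ ρ N m' (fun ε z => a ε z - a' ε z)) := by
  obtain ⟨hρ0, hρ1⟩ := hρ
  have hV : True := trivial
  -- ## normalized constants for Λ derivatives
  have hΛder' : ∀ p : ℕ, ∃ c : ℝ, 0 ≤ c ∧ ∀ z,
      ‖iteratedFDeriv ℝ p Λ z‖ ≤ c * Λ z ^ ((1 : ℝ) - (p : ℝ)) := by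
    intro p
    obtain ⟨c, hc⟩ := hΛder p
    refine ⟨max c 0, le_max_right _ _, fun z => (hc z).trans ?_⟩
    exact mul_le_mul_of_nonneg_right (le_max_left _ _) (Real.rpow_pos_of_pos (hpos z) _).le
  choose cΛ hcΛ0 hcΛ using hΛder'
  -- ## normalized constants for the aj
  have hajsm : ∀ j, ∀ ε ∈ Set.Ioc (0:ℝ) 1, ContDiff ℝ (⊤ : ℕ∞) (aj j ε) := fun j => (haj j).1
  have haj' : ∀ j k : ℕ, ∃ c : ℝ, 0 ≤ c ∧ ∀ ε ∈ Set.Ioc (0:ℝ) 1, ∀ z,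
      ‖iteratedFDeriv ℝ k (aj j ε) z‖ ≤ c * Λ z ^ (m j - ρ * (k : ℝ)) * ε⁻¹ ^ N := by
    intro j k
    obtain ⟨c, hc⟩ := (haj j).2 k
    refine ⟨max c 0, le_max_right _ _, fun ε hε z => (hc ε hε z).trans ?_⟩
    have h1 : (0:ℝ) < Λ z ^ (m j - ρ * (k : ℝ)) := Real.rpow_pos_of_pos (hpos z) _
    have h2 : (0:ℝ) < ε⁻¹ ^ N := by
      have := hε.1; positivity
    have := mul_le_mul_of_nonneg_right (le_max_left c 0) h1.le
    exact mul_le_mul_of_nonneg_right this h2.le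
  choose ca hca0 hca using haj'
  -- ## lower bound c₁ for Λ
  set c₁ : ℝ := min c₀ 1 with hc₁def
  have hc₁0 : 0 < c₁ := lt_min hc₀ one_pos
  have hc₁1 : c₁ ≤ 1 := min_le_right _ _
  have hΛlow : ∀ z, c₁ ≤ Λ z := by
    intro z
    have h1 : (1:ℝ) ≤ jap z := by
      rw [jap, Real.one_le_sqrt]
      · nlinarith [sq_nonneg ‖z‖]
    have h2 : (1:ℝ) ≤ jap z ^ μ := Real.one_le_rpow h1 hμ.le
    calc c₁ ≤ c₀ := min_le_left _ _
      _ = c₀ * 1 := (mul_one _).symm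
      _ ≤ c₀ * jap z ^ μ := by nlinarith
      _ ≤ Λ z := hlow z
  -- comparing powers of Λ with nonpositive exponents
  have hrpow_c₁ : ∀ (z) (s : ℝ), s ≤ 0 → Λ z ^ s ≤ c₁ ^ s := fun z s hs =>
    Real.rpow_le_rpow_of_nonpos hc₁0 (hΛlow z) hs
  have hrpow_split : ∀ (z) (s t : ℝ), Λ z ^ s = Λ z ^ (s - t) * Λ z ^ t := by
    intro z s t
    rw [← Real.rpow_add (hpos z)]
    ring_nf
  -- ## cutoff derivative bounds
  have hCχ := fun k => chi_deriv_bound hpos hΛsm cΛ hcΛ0 hcΛ hρ0 hρ1 k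
  choose Cχ hCχ1 hCχb using hCχ
  -- ## pointwise Leibniz estimate for f • aj
  have LEIB : ∀ (f : (Fin (2 * n) → ℝ) → ℝ) (j k : ℕ) (Cf : ℝ), ∀ ε ∈ Set.Ioc (0:ℝ) 1, ∀ z,
      ContDiff ℝ (⊤ : ℕ∞) f → 0 ≤ Cf → (∀ i ≤ k, ‖iteratedFDeriv ℝ i f z‖ ≤ Cf * Λ z ^ (-(ρ * (i:ℝ)))) →
      ‖iteratedFDeriv ℝ k (fun w => f w • aj j ε w) z‖ ≤
        (∑ i ∈ Finset.range (k+1), (k.choose i : ℝ) * Cf * ca j (k - i)) *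
          Λ z ^ (m j - ρ * (k:ℝ)) * ε⁻¹ ^ N := by
    intro f j k Cf ε hε z hf hCf0 hbound
    have hεN : (0:ℝ) < ε⁻¹ ^ N := by have := hε.1; positivity
    have hX : (0:ℝ) < Λ z ^ (m j - ρ * (k:ℝ)) := Real.rpow_pos_of_pos (hpos z) _
    have hL := norm_iteratedFDeriv_smul_le (𝕜 := ℝ) hf (hajsm j ε hε) z
      (n := k) (by exact_mod_cast le_top)
    refine hL.trans ?_
    have hterm : ∀ i ∈ Finset.range (k+1),
        (k.choose i : ℝ) * ‖iteratedFDeriv ℝ i f z‖ * ‖iteratedFDeriv ℝ (k-i) (aj j ε) z‖ ≤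
        ((k.choose i : ℝ) * Cf * ca j (k - i)) * (Λ z ^ (m j - ρ * (k:ℝ)) * ε⁻¹ ^ N) := by
      intro i hi
      have hik : i ≤ k := by
        have := Finset.mem_range.1 hi; omega
      have e1 := hbound i hik
      have e2 := hca j (k-i) ε hε z
      have hmul : ‖iteratedFDeriv ℝ i f z‖ * ‖iteratedFDeriv ℝ (k-i) (aj j ε) z‖ ≤
          (Cf * Λ z ^ (-(ρ*(i:ℝ)))) * (ca j (k-i) * Λ z ^ (m j - ρ * ((k-i : ℕ):ℝ)) * ε⁻¹ ^ N) :=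
        mul_le_mul e1 e2 (norm_nonneg _) (mul_nonneg hCf0 (Real.rpow_nonneg (hpos z).le _))
      have hexp : Λ z ^ (-(ρ*(i:ℝ))) * Λ z ^ (m j - ρ * ((k-i : ℕ):ℝ)) = Λ z ^ (m j - ρ * (k:ℝ)) := by
        rw [← Real.rpow_add (hpos z)]
        congr 1
        push_cast [Nat.cast_sub hik]
        ring
      have hre : (Cf * Λ z ^ (-(ρ*(i:ℝ)))) * (ca j (k-i) * Λ z ^ (m j - ρ * ((k-i : ℕ):ℝ)) * ε⁻¹ ^ N)
          = (Cf * ca j (k-i)) * (Λ z ^ (m j - ρ * (k:ℝ)) * ε⁻¹ ^ N) := by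
        rw [← hexp]; ring
      calc (k.choose i : ℝ) * ‖iteratedFDeriv ℝ i f z‖ * ‖iteratedFDeriv ℝ (k-i) (aj j ε) z‖
          = (k.choose i : ℝ) * (‖iteratedFDeriv ℝ i f z‖ * ‖iteratedFDeriv ℝ (k-i) (aj j ε) z‖) := by
            ring
        _ ≤ (k.choose i : ℝ) * ((Cf * ca j (k-i)) * (Λ z ^ (m j - ρ * (k:ℝ)) * ε⁻¹ ^ N)) := by
            rw [← hre]
            exact mul_le_mul_of_nonneg_left hmul (by positivity)
        _ = ((k.choose i : ℝ) * Cf * ca j (k - i)) * (Λ z ^ (m j - ρ * (k:ℝ)) * ε⁻¹ ^ N) := by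
            ring
    refine (Finset.sum_le_sum hterm).trans (le_of_eq ?_)
    rw [← Finset.sum_mul, ← mul_assoc]
  -- ## symbol estimate for the cutoff terms, uniform in the cutoff scale
  have L2 : ∀ j k : ℕ, ∃ A : ℝ, 0 ≤ A ∧ ∀ l ∈ Set.Ioc (0:ℝ) 1, ∀ ε ∈ Set.Ioc (0:ℝ) 1, ∀ z,
      ‖iteratedFDeriv ℝ k (fun w => psi (l * Λ w) • aj j ε w) z‖ ≤
        A * Λ z ^ (m j - ρ * (k:ℝ)) * ε⁻¹ ^ N := by
    intro j k
    refine ⟨∑ i ∈ Finset.range (k+1), (k.choose i : ℝ) * Cχ k * ca j (k - i), ?_, ?_⟩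
    · apply Finset.sum_nonneg
      intro i _
      have := hCχ1 k
      have := hca0 j (k - i)
      positivity
    intro l hl ε hε z
    exact LEIB _ j k (Cχ k) ε hε z (chi_contDiff hΛsm l) (by linarith [hCχ1 k])
      (fun i hi => hCχb k l hl z i hi)
  choose A hA0 hA using L2
  -- ## the cutoff scales
  set Amax : ℕ → ℝ := fun j => 1 + ∑ k ∈ Finset.range (j+1), |A j k| with hAmaxdef
  have hAmax1 : ∀ j, 1 ≤ Amax j := fun j => le_add_of_nonneg_right (by positivity)
  have hAmax0 : ∀ j, 0 < Amax j := fun j => lt_of_lt_of_le one_pos (hAmax1 j)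
  have hAmaxA : ∀ j k, k ≤ j → A j k ≤ Amax j := by
    intro j k hk
    have h1 : A j k ≤ |A j k| := le_abs_self _
    have h2 : |A j k| ≤ ∑ q ∈ Finset.range (j+1), |A j q| :=
      Finset.single_le_sum (f := fun q => |A j q|) (fun q _ => abs_nonneg _)
        (Finset.mem_range.2 (by omega))
    simp only [hAmaxdef]
    linarith
  set lam : ℕ → ℝ := fun j =>
    if j = 0 then 1 else min 1 ((2 ^ (-(j:ℝ)) / Amax j) ^ (1 / (m (j-1) - m j))) with hlamdef
  have hlam_pos : ∀ j, 0 < lam j := by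
    intro j
    simp only [hlamdef]
    split
    · norm_num
    · refine lt_min one_pos (Real.rpow_pos_of_pos ?_ _)
      have := hAmax0 j
      positivity
  have hlam_le1 : ∀ j, lam j ≤ 1 := by
    intro j
    simp only [hlamdef]
    split
    · exact le_rfl
    · exact min_le_left _ _
  have hlam_mem : ∀ j, lam j ∈ Set.Ioc (0:ℝ) 1 := fun j => ⟨hlam_pos j, hlam_le1 j⟩
  -- the smallness property of the scales
  have hkey : ∀ j k : ℕ, 1 ≤ j → k ≤ j →
      A j k * lam j ^ (m (j-1) - m j) ≤ (1/2 : ℝ)^j := by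
    intro j k hj1 hkj
    have hd : 0 < m (j-1) - m j := sub_pos.2 (hmono (by omega : j - 1 < j))
    have h2pos : (0:ℝ) < 2 ^ (-(j:ℝ)) := Real.rpow_pos_of_pos (by norm_num) _
    have hY : (0:ℝ) < 2 ^ (-(j:ℝ)) / Amax j := div_pos h2pos (hAmax0 j)
    have hlamj : lam j = min 1 ((2 ^ (-(j:ℝ)) / Amax j) ^ (1 / (m (j-1) - m j))) := by
      simp only [hlamdef]
      rw [if_neg (by omega)]
    have h1 : lam j ^ (m (j-1) - m j) ≤
        ((2 ^ (-(j:ℝ)) / Amax j) ^ (1 / (m (j-1) - m j))) ^ (m (j-1) - m j) := by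
      apply Real.rpow_le_rpow (hlam_pos j).le _ hd.le
      rw [hlamj]
      exact min_le_right _ _
    have h2 : ((2 ^ (-(j:ℝ)) / Amax j) ^ (1 / (m (j-1) - m j))) ^ (m (j-1) - m j)
        = 2 ^ (-(j:ℝ)) / Amax j := by
      rw [← Real.rpow_mul hY.le, one_div, inv_mul_cancel₀ hd.ne', Real.rpow_one]
    have h3 : A j k * lam j ^ (m (j-1) - m j) ≤ Amax j * (2 ^ (-(j:ℝ)) / Amax j) :=
      mul_le_mul (hAmaxA j k hkj) (h1.trans_eq h2) (Real.rpow_nonneg (hlam_pos j).le _)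
        (hAmax0 j).le
    have h4 : Amax j * (2 ^ (-(j:ℝ)) / Amax j) = 2 ^ (-(j:ℝ)) := by
      field_simp [(hAmax0 j).ne']
    have h5 : (2:ℝ) ^ (-(j:ℝ)) = (1/2:ℝ)^j := by
      rw [Real.rpow_neg (by norm_num : (0:ℝ) ≤ 2), Real.rpow_natCast, ← inv_pow, one_div]
    rw [h4, h5] at h3
    exact h3
  -- ## the localized terms
  set T : ℕ → ℝ → (Fin (2 * n) → ℝ) → ℂ := fun j ε z => psi (lam j * Λ z) • aj j ε z with hTdef
  have hTsm : ∀ j, ∀ ε ∈ Set.Ioc (0:ℝ) 1, ContDiff ℝ (⊤ : ℕ∞) (T j ε) := by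
    intro j ε hε
    exact (chi_contDiff hΛsm (lam j)).smul (hajsm j ε hε)
  have hTbound : ∀ j k, ∀ ε ∈ Set.Ioc (0:ℝ) 1, ∀ z,
      ‖iteratedFDeriv ℝ k (T j ε) z‖ ≤ A j k * Λ z ^ (m j - ρ * (k:ℝ)) * ε⁻¹ ^ N :=
    fun j k ε hε z => hA j k (lam j) (hlam_mem j) ε hε z
  have hTvanish : ∀ j k ε z, lam j * Λ z < 1 → iteratedFDeriv ℝ k (T j ε) z = 0 := by
    intro j k ε z hz
    have hev : T j ε =ᶠ[nhds z] (fun _ => (0:ℂ)) := by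
      have hopen : IsOpen {w | lam j * Λ w < 1} :=
        isOpen_lt (continuous_const.mul hΛsm.continuous) continuous_const
      filter_upwards [hopen.mem_nhds hz] with w hw
      simp only [hTdef, psi_zero (le_of_lt hw), zero_smul]
    rw [iteratedFDeriv_congr_nhds hev, iteratedFDeriv_zero_fun]
    rfl
  -- ## the master estimate
  have MASTER : ∀ r k : ℕ, ∃ C : ℝ, 0 ≤ C ∧ ∀ j, r ≤ j → ∀ ε ∈ Set.Ioc (0:ℝ) 1, ∀ z,
      ‖iteratedFDeriv ℝ k (T j ε) z‖ ≤
        C * (1/2:ℝ)^j * Λ z ^ (m r - ρ * (k:ℝ)) * ε⁻¹ ^ N := by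
    intro r k
    set C : ℝ := 1 + ∑ j ∈ Finset.range (max r k + 1), |A j k| * c₁ ^ (m j - m r) * 2^j with hCdef
    have hC1 : (1:ℝ) ≤ C := by
      have : (0:ℝ) ≤ ∑ j ∈ Finset.range (max r k + 1), |A j k| * c₁ ^ (m j - m r) * 2^j := by
        apply Finset.sum_nonneg
        intro q _
        have := Real.rpow_pos_of_pos hc₁0 (m q - m r)
        positivity
      simp only [hCdef]
      linarith
    refine ⟨C, by linarith, ?_⟩
    intro j hrj ε hε z
    have hεN : (0:ℝ) < ε⁻¹ ^ N := by have := hε.1; positivity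
    have hXr : (0:ℝ) < Λ z ^ (m r - ρ * (k:ℝ)) := Real.rpow_pos_of_pos (hpos z) _
    by_cases h0 : iteratedFDeriv ℝ k (T j ε) z = 0
    · rw [h0, norm_zero]
      have h2j : (0:ℝ) < (1/2:ℝ)^j := by positivity
      have hC0 : (0:ℝ) < C := by linarith
      positivity
    have h1 : 1 ≤ lam j * Λ z := by
      by_contra h
      exact h0 (hTvanish j k ε z (lt_of_not_ge h))
    have hΛz1 : (1:ℝ) ≤ Λ z := by
      nlinarith [hlam_pos j, hlam_le1 j, hpos z]
    have hbase := hTbound j k ε hε z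
    by_cases hj : j ≤ max r k
    · have hsplit : Λ z ^ (m j - ρ * (k:ℝ)) = Λ z ^ (m j - m r) * Λ z ^ (m r - ρ * (k:ℝ)) := by
        rw [← Real.rpow_add (hpos z)]
        congr 1
        ring
      have hmjr : m j - m r ≤ 0 := sub_nonpos.2 (hmono.antitone hrj)
      have h2 : Λ z ^ (m j - m r) ≤ c₁ ^ (m j - m r) := hrpow_c₁ z _ hmjr
      have h2j : (0:ℝ) < (2:ℝ)^j := by positivity
      have hAC : A j k * c₁ ^ (m j - m r) ≤ C * (1/2:ℝ)^j := by
        have hs : A j k * c₁ ^ (m j - m r) * 2^j ≤ C := by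
          have hmem : j ∈ Finset.range (max r k + 1) := Finset.mem_range.2 (by omega)
          have hle : A j k * c₁ ^ (m j - m r) * 2^j ≤ |A j k| * c₁ ^ (m j - m r) * 2^j := by
            have h₂ := (Real.rpow_pos_of_pos hc₁0 (m j - m r)).le
            exact mul_le_mul_of_nonneg_right
              (mul_le_mul_of_nonneg_right (le_abs_self (A j k)) h₂) h2j.le
          refine hle.trans ?_
          have := Finset.single_le_sum
            (f := fun q => |A q k| * c₁ ^ (m q - m r) * 2^q)
            (fun q _ => by
              have := Real.rpow_pos_of_pos hc₁0 (m q - m r)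
              positivity) hmem
          simp only [hCdef]
          linarith
        have hhalf : ((1:ℝ)/2)^j = ((2:ℝ)^j)⁻¹ := by
          rw [div_pow, one_pow, one_div]
        rw [hhalf, mul_comm C, ← div_eq_inv_mul]
        rw [le_div_iff₀ h2j]
        linarith [hs]
      calc ‖iteratedFDeriv ℝ k (T j ε) z‖
          ≤ A j k * Λ z ^ (m j - ρ * (k:ℝ)) * ε⁻¹ ^ N := hbase
        _ = (A j k * Λ z ^ (m j - m r)) * Λ z ^ (m r - ρ * (k:ℝ)) * ε⁻¹ ^ N := by
            rw [hsplit]; ring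
        _ ≤ (A j k * c₁ ^ (m j - m r)) * Λ z ^ (m r - ρ * (k:ℝ)) * ε⁻¹ ^ N := by
            have := mul_le_mul_of_nonneg_left h2 (hA0 j k)
            exact mul_le_mul_of_nonneg_right (mul_le_mul_of_nonneg_right this hXr.le) hεN.le
        _ ≤ (C * (1/2:ℝ)^j) * Λ z ^ (m r - ρ * (k:ℝ)) * ε⁻¹ ^ N :=
            mul_le_mul_of_nonneg_right (mul_le_mul_of_nonneg_right hAC hXr.le) hεN.le
        _ = C * (1/2:ℝ)^j * Λ z ^ (m r - ρ * (k:ℝ)) * ε⁻¹ ^ N := by ring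
    · have hj1 : 1 ≤ j := by omega
      have hkj : k ≤ j := by omega
      have hrj1 : r ≤ j - 1 := by omega
      have hk := hkey j k hj1 hkj
      have hsplit : Λ z ^ (m j - ρ * (k:ℝ)) =
          Λ z ^ (m j - m (j-1)) * Λ z ^ (m (j-1) - m r) * Λ z ^ (m r - ρ * (k:ℝ)) := by
        rw [← Real.rpow_add (hpos z), ← Real.rpow_add (hpos z)]
        congr 1
        ring
      have hinv : (lam j)⁻¹ ≤ Λ z := by
        rw [inv_eq_one_div, div_le_iff₀ (hlam_pos j)]
        nlinarith
      have hb1 : Λ z ^ (m j - m (j-1)) ≤ lam j ^ (m (j-1) - m j) := by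
        have he : m j - m (j-1) ≤ 0 := sub_nonpos.2 (hmono (by omega : j - 1 < j)).le
        have := Real.rpow_le_rpow_of_nonpos (inv_pos.2 (hlam_pos j)) hinv he
        refine this.trans (le_of_eq ?_)
        rw [Real.inv_rpow (hlam_pos j).le, ← Real.rpow_neg (hlam_pos j).le, neg_sub]
      have hb2 : Λ z ^ (m (j-1) - m r) ≤ 1 :=
        Real.rpow_le_one_of_one_le_of_nonpos hΛz1 (sub_nonpos.2 (hmono.antitone hrj1))
      have hp1 : (0:ℝ) < Λ z ^ (m j - m (j-1)) := Real.rpow_pos_of_pos (hpos z) _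
      have hp2 : (0:ℝ) < Λ z ^ (m (j-1) - m r) := Real.rpow_pos_of_pos (hpos z) _
      have hlampow : (0:ℝ) ≤ lam j ^ (m (j-1) - m j) := Real.rpow_nonneg (hlam_pos j).le _
      calc ‖iteratedFDeriv ℝ k (T j ε) z‖
          ≤ A j k * Λ z ^ (m j - ρ * (k:ℝ)) * ε⁻¹ ^ N := hbase
        _ = (A j k * Λ z ^ (m j - m (j-1)) * Λ z ^ (m (j-1) - m r)) *
              Λ z ^ (m r - ρ * (k:ℝ)) * ε⁻¹ ^ N := by rw [hsplit]; ring
        _ ≤ (A j k * lam j ^ (m (j-1) - m j) * 1) * Λ z ^ (m r - ρ * (k:ℝ)) * ε⁻¹ ^ N := by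
            have hstep : A j k * Λ z ^ (m j - m (j-1)) * Λ z ^ (m (j-1) - m r) ≤
                A j k * lam j ^ (m (j-1) - m j) * 1 := by
              have hA0' := hA0 j k
              have e1 : A j k * Λ z ^ (m j - m (j-1)) ≤ A j k * lam j ^ (m (j-1) - m j) :=
                mul_le_mul_of_nonneg_left hb1 hA0'
              have e2 : (0:ℝ) ≤ A j k * Λ z ^ (m j - m (j-1)) := by positivity
              calc A j k * Λ z ^ (m j - m (j-1)) * Λ z ^ (m (j-1) - m r)
                  ≤ A j k * Λ z ^ (m j - m (j-1)) * 1 := mul_le_mul_of_nonneg_left hb2 e2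
                _ ≤ A j k * lam j ^ (m (j-1) - m j) * 1 := by
                    rw [mul_one, mul_one]; exact e1
            exact mul_le_mul_of_nonneg_right (mul_le_mul_of_nonneg_right hstep hXr.le) hεN.le
        _ ≤ ((1/2:ℝ)^j) * Λ z ^ (m r - ρ * (k:ℝ)) * ε⁻¹ ^ N := by
            rw [mul_one]
            exact mul_le_mul_of_nonneg_right (mul_le_mul_of_nonneg_right hk hXr.le) hεN.le
        _ ≤ C * (1/2:ℝ)^j * Λ z ^ (m r - ρ * (k:ℝ)) * ε⁻¹ ^ N := by
            have h2j : (0:ℝ) < (1/2:ℝ)^j := by positivity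
            have hcc : (1/2:ℝ)^j ≤ C * (1/2:ℝ)^j := by nlinarith
            exact mul_le_mul_of_nonneg_right (mul_le_mul_of_nonneg_right hcc hXr.le) hεN.le
  choose CM hCM0 hCM using MASTER
  -- ## start index for the uniform tail
  obtain ⟨J₀, hJ₀⟩ : ∃ J : ℕ, m J < 0 := by
    obtain ⟨J, hJ⟩ := (hlim.eventually (Filter.eventually_le_atBot (-1))).exists
    exact ⟨J, by linarith⟩
  -- ## the asymptotic sum
  set a : ℝ → (Fin (2 * n) → ℝ) → ℂ := fun ε z =>
    (∑ j ∈ Finset.range J₀, T j ε z) + ∑' i : ℕ, T (J₀ + i) ε z with hadef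
  have hεNpos : ∀ ε ∈ Set.Ioc (0:ℝ) 1, (0:ℝ) < ε⁻¹ ^ N := by
    intro ε hε; have := hε.1; positivity
  have hgeo2 : Summable (fun i : ℕ => ((1:ℝ)/2)^i) :=
    summable_geometric_of_lt_one (by norm_num) (by norm_num)
  -- uniform smoothness/derivative exchange for tails
  have TAIL : ∀ s, J₀ ≤ s → ∀ ε ∈ Set.Ioc (0:ℝ) 1,
      ContDiff ℝ (⊤:ℕ∞) (fun z => ∑' i:ℕ, T (s+i) ε z) ∧
      (∀ k:ℕ, iteratedFDeriv ℝ k (fun z => ∑' i:ℕ, T (s+i) ε z)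
         = fun x => ∑' i:ℕ, iteratedFDeriv ℝ k (T (s+i) ε) x) := by
    intro s hs ε hε
    set v : ℕ → ℕ → ℝ := fun k i =>
      (CM J₀ k * c₁ ^ (m J₀ - ρ * (k:ℝ)) * ε⁻¹^N * (1/2:ℝ)^s) * (1/2:ℝ)^i with hvdef
    have hv : ∀ k:ℕ, Summable (v k) := fun k => hgeo2.mul_left _
    have hfb : ∀ (k:ℕ) (i:ℕ) (x : Fin (2*n) → ℝ), ‖iteratedFDeriv ℝ k (T (s+i) ε) x‖ ≤ v k i := by
      intro k i x
      have h1 := hCM J₀ k (s+i) (by omega) ε hε x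
      have hex : m J₀ - ρ*(k:ℝ) ≤ 0 := by
        have : (0:ℝ) ≤ ρ*(k:ℝ) := by positivity
        linarith
      have h2 : Λ x ^ (m J₀ - ρ*(k:ℝ)) ≤ c₁ ^ (m J₀ - ρ*(k:ℝ)) := hrpow_c₁ x _ hex
      have h3 : CM J₀ k * (1/2:ℝ)^(s+i) * Λ x ^ (m J₀ - ρ*(k:ℝ)) * ε⁻¹^N ≤
          CM J₀ k * (1/2:ℝ)^(s+i) * c₁ ^ (m J₀ - ρ*(k:ℝ)) * ε⁻¹^N := by
        have hnn : (0:ℝ) ≤ CM J₀ k * (1/2:ℝ)^(s+i) :=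
          mul_nonneg (hCM0 J₀ k) (by positivity)
        exact mul_le_mul_of_nonneg_right (mul_le_mul_of_nonneg_left h2 hnn) (hεNpos ε hε).le
      refine (h1.trans h3).trans (le_of_eq ?_)
      simp only [hvdef]
      rw [pow_add]
      ring
    exact ⟨contDiff_tsum (fun i => hTsm (s+i) ε hε) (fun k _ => hv k) (fun k i x _ => hfb k i x),
      fun k => iteratedFDeriv_tsum (fun i => hTsm (s+i) ε hε) (fun k _ => hv k)
        (fun k i x _ => hfb k i x) (le_top)⟩
  -- pointwise summability
  have hsumpt : ∀ s, J₀ ≤ s → ∀ ε ∈ Set.Ioc (0:ℝ) 1, ∀ z, Summable (fun i:ℕ => T (s+i) ε z) := by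
    intro s hs ε hε z
    apply Summable.of_norm
    have hg : Summable (fun i:ℕ =>
        (CM J₀ 0 * Λ z ^ (m J₀ - ρ * ((0:ℕ):ℝ)) * ε⁻¹^N * (1/2:ℝ)^s) * (1/2:ℝ)^i) :=
      hgeo2.mul_left _
    refine Summable.of_nonneg_of_le (fun i => norm_nonneg _) (fun i => ?_)
      (hg.congr (fun i => rfl))
    have h1 := hCM J₀ 0 (s+i) (by omega) ε hε z
    have h2 : ‖T (s+i) ε z‖ = ‖iteratedFDeriv ℝ 0 (T (s+i) ε) z‖ := by
      rw [norm_iteratedFDeriv_zero]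
    rw [h2]
    refine h1.trans (le_of_eq ?_)
    rw [pow_add]
    ring
  -- re-splitting of the sum defining a
  have hID : ∀ s, J₀ ≤ s → ∀ ε ∈ Set.Ioc (0:ℝ) 1, ∀ z,
      a ε z = (∑ j ∈ Finset.range s, T j ε z) + ∑' i:ℕ, T (s+i) ε z := by
    intro s hs ε hε z
    have hsum := hsumpt J₀ le_rfl ε hε z
    have h1 := Summable.sum_add_tsum_nat_add (f := fun i => T (J₀+i) ε z) (s - J₀) hsum
    have h2 : (∑' i:ℕ, T (J₀ + (i + (s - J₀))) ε z) = ∑' i:ℕ, T (s+i) ε z :=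
      tsum_congr (fun i => by rw [show J₀ + (i + (s - J₀)) = s + i by omega])
    have h3 : (∑ i ∈ Finset.range (s - J₀), T (J₀+i) ε z) = ∑ j ∈ Finset.Ico J₀ s, T j ε z :=
      (Finset.sum_Ico_eq_sum_range (f := fun j => T j ε z) (m := J₀) (n := s)).symm
    have h4 := Finset.sum_range_add_sum_Ico (f := fun j => T j ε z) hs
    simp only [hadef]
    rw [← h1, h2, h3, ← add_assoc, h4]
  -- bound for finite partial sums of localized terms
  have FINBOUND : ∀ (S : Finset ℕ) (r k : ℕ), (∀ j ∈ S, r ≤ j) → ∀ ε ∈ Set.Ioc (0:ℝ) 1, ∀ z,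
      ‖∑ j ∈ S, iteratedFDeriv ℝ k (T j ε) z‖ ≤
        2 * CM r k * Λ z ^ (m r - ρ*(k:ℝ)) * ε⁻¹^N := by
    intro S r k hS ε hε z
    have h2sum : (∑ j ∈ S, ((1:ℝ)/2)^j) ≤ 2 := by
      have h := Summable.sum_le_tsum S (fun i _ => by positivity) hgeo2
      rwa [tsum_geometric_two] at h
    calc ‖∑ j ∈ S, iteratedFDeriv ℝ k (T j ε) z‖
        ≤ ∑ j ∈ S, ‖iteratedFDeriv ℝ k (T j ε) z‖ := norm_sum_le _ _
      _ ≤ ∑ j ∈ S, ((1/2:ℝ)^j * (CM r k * Λ z ^ (m r - ρ*(k:ℝ)) * ε⁻¹^N)) :=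
          Finset.sum_le_sum (fun j hj => (hCM r k j (hS j hj) ε hε z).trans (le_of_eq (by ring)))
      _ = (∑ j ∈ S, ((1:ℝ)/2)^j) * (CM r k * Λ z ^ (m r - ρ*(k:ℝ)) * ε⁻¹^N) := by
          rw [← Finset.sum_mul]
      _ ≤ 2 * (CM r k * Λ z ^ (m r - ρ*(k:ℝ)) * ε⁻¹^N) := by
          have hnn : (0:ℝ) ≤ CM r k * Λ z ^ (m r - ρ*(k:ℝ)) * ε⁻¹^N := by
            have := Real.rpow_pos_of_pos (hpos z) (m r - ρ*(k:ℝ))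
            have := hεNpos ε hε
            have := hCM0 r k
            positivity
          exact mul_le_mul_of_nonneg_right h2sum hnn
      _ = 2 * CM r k * Λ z ^ (m r - ρ*(k:ℝ)) * ε⁻¹^N := by ring
  -- bound for the tails
  have TAILBOUND : ∀ (s r k : ℕ), r ≤ s → J₀ ≤ s → ∀ ε ∈ Set.Ioc (0:ℝ) 1, ∀ z,
      ‖∑' i:ℕ, iteratedFDeriv ℝ k (T (s+i) ε) z‖ ≤
        2 * CM r k * Λ z ^ (m r - ρ*(k:ℝ)) * ε⁻¹^N := by
    intro s r k hrs hJs ε hε z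
    set c : ℝ := CM r k * Λ z ^ (m r - ρ*(k:ℝ)) * ε⁻¹^N * (1/2:ℝ)^s with hcdef
    have hgeom : HasSum (fun i:ℕ => c * (1/2:ℝ)^i) (c * 2) := hasSum_geometric_two.mul_left c
    have hb : ∀ i:ℕ, ‖iteratedFDeriv ℝ k (T (s+i) ε) z‖ ≤ c * (1/2:ℝ)^i := by
      intro i
      have h1 := hCM r k (s+i) (by omega) ε hε z
      refine h1.trans (le_of_eq ?_)
      simp only [hcdef]
      rw [pow_add]
      ring
    have hmain := tsum_of_norm_bounded hgeom hb
    refine hmain.trans ?_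
    have hnn : (0:ℝ) ≤ CM r k * Λ z ^ (m r - ρ*(k:ℝ)) * ε⁻¹^N := by
      have := Real.rpow_pos_of_pos (hpos z) (m r - ρ*(k:ℝ))
      have := hεNpos ε hε
      have := hCM0 r k
      positivity
    have hps : ((1:ℝ)/2)^s ≤ 1 := pow_le_one₀ (by norm_num) (by norm_num)
    simp only [hcdef]
    nlinarith
  -- head terms (1 - cutoff) estimates
  have HEAD : ∀ (j r' k : ℕ), ∃ C:ℝ, 0 ≤ C ∧ ∀ ε ∈ Set.Ioc (0:ℝ) 1, ∀ z,
      ‖iteratedFDeriv ℝ k (fun w => T j ε w - aj j ε w) z‖ ≤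
        C * Λ z ^ (m r' - ρ*(k:ℝ)) * ε⁻¹ ^ N := by
    intro j r' k
    refine ⟨(∑ i ∈ Finset.range (k+1), (k.choose i : ℝ) * Cχ k * ca j (k - i)) *
      (c₁ ^ (m j - m r') + (2/lam j) ^ (m j - m r')), ?_, ?_⟩
    · have h1 : (0:ℝ) ≤ ∑ i ∈ Finset.range (k+1), (k.choose i : ℝ) * Cχ k * ca j (k - i) := by
        apply Finset.sum_nonneg
        intro i _
        have := hCχ1 k
        have := hca0 j (k-i)
        positivity
      have h2 := Real.rpow_pos_of_pos hc₁0 (m j - m r')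
      have h3 := Real.rpow_pos_of_pos (div_pos two_pos (hlam_pos j)) (m j - m r')
      nlinarith
    intro ε hε z
    have hfun : (fun w => T j ε w - aj j ε w) =
        fun w => (psi (lam j * Λ w) - 1) • aj j ε w := by
      funext w
      simp only [hTdef, sub_smul, one_smul]
    rw [hfun]
    by_cases hbig : 2 < lam j * Λ z
    · have hev : (fun w => (psi (lam j * Λ w) - 1) • aj j ε w) =ᶠ[nhds z]
          (fun _ => (0:ℂ)) := by
        have hopen : IsOpen {w | 2 < lam j * Λ w} :=
          isOpen_lt continuous_const (continuous_const.mul hΛsm.continuous)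
        filter_upwards [hopen.mem_nhds hbig] with w hw
        rw [psi_one (le_of_lt hw)]
        simp
      rw [iteratedFDeriv_congr_nhds hev, iteratedFDeriv_zero_fun]
      simp only [Pi.zero_apply, norm_zero]
      have h2 := Real.rpow_pos_of_pos hc₁0 (m j - m r')
      have h3 := Real.rpow_pos_of_pos (div_pos two_pos (hlam_pos j)) (m j - m r')
      have h4 := Real.rpow_pos_of_pos (hpos z) (m r' - ρ*(k:ℝ))
      have h5 := hεNpos ε hε
      have h1 : (0:ℝ) ≤ ∑ i ∈ Finset.range (k+1), (k.choose i : ℝ) * Cχ k * ca j (k - i) := by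
        apply Finset.sum_nonneg
        intro i _
        have := hCχ1 k
        have := hca0 j (k-i)
        positivity
      positivity
    · have hfsm : ContDiff ℝ (⊤:ℕ∞) (fun w => psi (lam j * Λ w) - 1) :=
        (chi_contDiff hΛsm (lam j)).sub contDiff_const
      have hfb : ∀ i ≤ k, ‖iteratedFDeriv ℝ i (fun w => psi (lam j * Λ w) - 1) z‖ ≤
          Cχ k * Λ z ^ (-(ρ*(i:ℝ))) := by
        intro i hi
        rcases Nat.eq_zero_or_pos i with hi0 | hi1
        · subst hi0
          simp only [Nat.cast_zero, mul_zero, neg_zero, Real.rpow_zero, mul_one,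
            norm_iteratedFDeriv_zero]
          have hp1 := psi_nonneg (lam j * Λ z)
          have hp2 := psi_le_one (lam j * Λ z)
          have : ‖psi (lam j * Λ z) - 1‖ ≤ 1 := by
            rw [Real.norm_eq_abs, abs_le]
            constructor <;> linarith
          linarith [hCχ1 k]
        · have heq : iteratedFDeriv ℝ i (fun w => psi (lam j * Λ w) - 1) z =
              iteratedFDeriv ℝ i (fun w => psi (lam j * Λ w)) z := by
            have h1 : (fun w => psi (lam j * Λ w) - 1) =
                fun w => psi (lam j * Λ w) + (fun _ : Fin (2*n) → ℝ => (-1:ℝ)) w := by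
              funext w; ring
            rw [h1, iteratedFDeriv_add_apply'
              ((chi_contDiff hΛsm (lam j)).contDiffAt.of_le (by exact_mod_cast le_top)) contDiff_const.contDiffAt]
            rw [iteratedFDeriv_const_of_ne (by omega)]
            simp
          rw [heq]
          exact hCχb k (lam j) (hlam_mem j) z i hi
      have hmain := LEIB (fun w => psi (lam j * Λ w) - 1) j k (Cχ k) ε hε z hfsm
        (by linarith [hCχ1 k]) hfb
      refine hmain.trans ?_
      have hΛup : Λ z ≤ 2 / lam j := by
        rw [le_div_iff₀ (hlam_pos j)]
        nlinarith [hlam_pos j]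
      have hsplit : Λ z ^ (m j - ρ*(k:ℝ)) =
          Λ z ^ (m j - m r') * Λ z ^ (m r' - ρ*(k:ℝ)) := by
        rw [← Real.rpow_add (hpos z)]
        congr 1
        ring
      have hcomp : Λ z ^ (m j - m r') ≤ c₁ ^ (m j - m r') + (2/lam j) ^ (m j - m r') := by
        rcases le_or_gt 0 (m j - m r') with he | he
        · have h1 := Real.rpow_le_rpow (hpos z).le hΛup he
          have h2 := Real.rpow_pos_of_pos hc₁0 (m j - m r')
          linarith
        · have h1 := hrpow_c₁ z _ he.le
          have h2 := Real.rpow_pos_of_pos (div_pos two_pos (hlam_pos j)) (m j - m r')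
          linarith
      have h1 : (0:ℝ) ≤ ∑ i ∈ Finset.range (k+1), (k.choose i : ℝ) * Cχ k * ca j (k - i) := by
        apply Finset.sum_nonneg
        intro i _
        have := hCχ1 k
        have := hca0 j (k-i)
        positivity
      have h4 := Real.rpow_pos_of_pos (hpos z) (m r' - ρ*(k:ℝ))
      have h5 := hεNpos ε hε
      calc (∑ i ∈ Finset.range (k+1), (k.choose i : ℝ) * Cχ k * ca j (k - i)) *
            Λ z ^ (m j - ρ*(k:ℝ)) * ε⁻¹ ^ N
          = (∑ i ∈ Finset.range (k+1), (k.choose i : ℝ) * Cχ k * ca j (k - i)) *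
            Λ z ^ (m j - m r') * Λ z ^ (m r' - ρ*(k:ℝ)) * ε⁻¹ ^ N := by
            rw [hsplit]; ring
        _ ≤ (∑ i ∈ Finset.range (k+1), (k.choose i : ℝ) * Cχ k * ca j (k - i)) *
            (c₁ ^ (m j - m r') + (2/lam j) ^ (m j - m r')) *
            Λ z ^ (m r' - ρ*(k:ℝ)) * ε⁻¹ ^ N := by
            have := mul_le_mul_of_nonneg_left hcomp h1
            exact mul_le_mul_of_nonneg_right (mul_le_mul_of_nonneg_right this h4.le) h5.le
  choose CH hCH0 hCH using HEAD
  -- ## a is a symbol of order m 0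
  have hasm : ∀ ε ∈ Set.Ioc (0:ℝ) 1, ContDiff ℝ (⊤:ℕ∞) (a ε) := by
    intro ε hε
    have hfin : ContDiff ℝ (⊤:ℕ∞) (fun z => ∑ j ∈ Finset.range J₀, T j ε z) :=
      ContDiff.sum (fun j _ => hTsm j ε hε)
    exact hfin.add (TAIL J₀ le_rfl ε hε).1
  have hSC0 : SC Λ ρ N (m 0) a := by
    refine ⟨hasm, fun k => ⟨2 * CM 0 k + 2 * CM 0 k, fun ε hε z => ?_⟩⟩
    have hfin : ContDiff ℝ (⊤:ℕ∞) (fun z => ∑ j ∈ Finset.range J₀, T j ε z) :=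
      ContDiff.sum (fun j _ => hTsm j ε hε)
    have htail := TAIL J₀ le_rfl ε hε
    have hsplit : iteratedFDeriv ℝ k (a ε) z =
        iteratedFDeriv ℝ k (fun z => ∑ j ∈ Finset.range J₀, T j ε z) z +
        iteratedFDeriv ℝ k (fun z => ∑' i:ℕ, T (J₀+i) ε z) z := by
      exact iteratedFDeriv_add_apply' (hfin.contDiffAt.of_le (by exact_mod_cast le_top))
        (htail.1.contDiffAt.of_le (by exact_mod_cast le_top))
    rw [hsplit]
    have hb1 : ‖iteratedFDeriv ℝ k (fun z => ∑ j ∈ Finset.range J₀, T j ε z) z‖ ≤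
        2 * CM 0 k * Λ z ^ (m 0 - ρ*(k:ℝ)) * ε⁻¹^N := by
      have heq : iteratedFDeriv ℝ k (fun z => ∑ j ∈ Finset.range J₀, T j ε z) z =
          ∑ j ∈ Finset.range J₀, iteratedFDeriv ℝ k (T j ε) z := by
        have := iteratedFDeriv_sum (𝕜 := ℝ) (f := fun j => T j ε) (u := Finset.range J₀)
          (i := k) (fun j _ => (hTsm j ε hε).of_le (by exact_mod_cast le_top))
        rw [congrFun this z]
        simp
      rw [heq]
      exact FINBOUND (Finset.range J₀) 0 k (fun j _ => Nat.zero_le j) ε hε z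
    have hb2 : ‖iteratedFDeriv ℝ k (fun z => ∑' i:ℕ, T (J₀+i) ε z) z‖ ≤
        2 * CM 0 k * Λ z ^ (m 0 - ρ*(k:ℝ)) * ε⁻¹^N := by
      rw [congrFun (htail.2 k) z]
      exact TAILBOUND J₀ 0 k (Nat.zero_le J₀) le_rfl ε hε z
    calc ‖iteratedFDeriv ℝ k (fun z => ∑ j ∈ Finset.range J₀, T j ε z) z +
          iteratedFDeriv ℝ k (fun z => ∑' i:ℕ, T (J₀+i) ε z) z‖
        ≤ ‖iteratedFDeriv ℝ k (fun z => ∑ j ∈ Finset.range J₀, T j ε z) z‖ +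
          ‖iteratedFDeriv ℝ k (fun z => ∑' i:ℕ, T (J₀+i) ε z) z‖ := norm_add_le _ _
      _ ≤ (2 * CM 0 k + 2 * CM 0 k) * Λ z ^ (m 0 - ρ*(k:ℝ)) * ε⁻¹^N := by
          have := hb1
          have := hb2
          nlinarith [Real.rpow_pos_of_pos (hpos z) (m 0 - ρ*(k:ℝ)), hεNpos ε hε]
  -- ## the remainder estimates
  have hREM : ∀ r : ℕ, 1 ≤ r →
      SC Λ ρ N (m r) (fun ε z => a ε z - ∑ j ∈ Finset.range r, aj j ε z) := by
    intro r hr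
    constructor
    · intro ε hε
      exact (hasm ε hε).sub (ContDiff.sum (fun j _ => hajsm j ε hε))
    intro k
    set s := max r J₀ with hsdef
    have hrs : r ≤ s := le_max_left _ _
    have hJs : J₀ ≤ s := le_max_right _ _
    refine ⟨(∑ j ∈ Finset.range r, CH j r k) + 2 * CM r k + 2 * CM r k, fun ε hε z => ?_⟩
    have hfun : (fun z => a ε z - ∑ j ∈ Finset.range r, aj j ε z) =
        fun z => ((∑ j ∈ Finset.range r, (T j ε z - aj j ε z)) +
          ∑ j ∈ Finset.Ico r s, T j ε z) + ∑' i:ℕ, T (s+i) ε z := by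
      funext w
      rw [hID s hJs ε hε w]
      rw [← Finset.sum_range_add_sum_Ico (f := fun j => T j ε w) hrs]
      rw [Finset.sum_sub_distrib]
      ring
    show ‖iteratedFDeriv ℝ k (fun z => a ε z - ∑ j ∈ Finset.range r, aj j ε z) z‖ ≤ _
    rw [hfun]
    have hsm1 : ContDiff ℝ (⊤:ℕ∞) (fun w => ∑ j ∈ Finset.range r, (T j ε w - aj j ε w)) :=
      ContDiff.sum (fun j _ => (hTsm j ε hε).sub (hajsm j ε hε))
    have hsm2 : ContDiff ℝ (⊤:ℕ∞) (fun w => ∑ j ∈ Finset.Ico r s, T j ε w) :=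
      ContDiff.sum (fun j _ => hTsm j ε hε)
    have hsm3 := (TAIL s hJs ε hε).1
    have hsplit1 : iteratedFDeriv ℝ k (fun w => ((∑ j ∈ Finset.range r, (T j ε w - aj j ε w)) +
          ∑ j ∈ Finset.Ico r s, T j ε w) + ∑' i:ℕ, T (s+i) ε w) z =
        iteratedFDeriv ℝ k (fun w => (∑ j ∈ Finset.range r, (T j ε w - aj j ε w)) +
          ∑ j ∈ Finset.Ico r s, T j ε w) z +
        iteratedFDeriv ℝ k (fun w => ∑' i:ℕ, T (s+i) ε w) z :=
      iteratedFDeriv_add_apply' ((hsm1.add hsm2).contDiffAt.of_le (by exact_mod_cast le_top))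
        (hsm3.contDiffAt.of_le (by exact_mod_cast le_top))
    have hsplit2 : iteratedFDeriv ℝ k (fun w => (∑ j ∈ Finset.range r, (T j ε w - aj j ε w)) +
          ∑ j ∈ Finset.Ico r s, T j ε w) z =
        iteratedFDeriv ℝ k (fun w => ∑ j ∈ Finset.range r, (T j ε w - aj j ε w)) z +
        iteratedFDeriv ℝ k (fun w => ∑ j ∈ Finset.Ico r s, T j ε w) z :=
      iteratedFDeriv_add_apply' (hsm1.contDiffAt.of_le (by exact_mod_cast le_top))
        (hsm2.contDiffAt.of_le (by exact_mod_cast le_top))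
    rw [hsplit1, hsplit2]
    have hb1 : ‖iteratedFDeriv ℝ k (fun w => ∑ j ∈ Finset.range r, (T j ε w - aj j ε w)) z‖ ≤
        (∑ j ∈ Finset.range r, CH j r k) * Λ z ^ (m r - ρ*(k:ℝ)) * ε⁻¹^N := by
      have heq : iteratedFDeriv ℝ k (fun w => ∑ j ∈ Finset.range r, (T j ε w - aj j ε w)) z =
          ∑ j ∈ Finset.range r, iteratedFDeriv ℝ k (fun w => T j ε w - aj j ε w) z := by
        have := iteratedFDeriv_sum (𝕜 := ℝ) (f := fun j => fun w => T j ε w - aj j ε w)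
          (u := Finset.range r) (i := k)
          (fun j _ => ((hTsm j ε hε).sub (hajsm j ε hε)).of_le (by exact_mod_cast le_top))
        rw [congrFun this z]
        simp
      rw [heq]
      calc ‖∑ j ∈ Finset.range r, iteratedFDeriv ℝ k (fun w => T j ε w - aj j ε w) z‖
          ≤ ∑ j ∈ Finset.range r, ‖iteratedFDeriv ℝ k (fun w => T j ε w - aj j ε w) z‖ :=
            norm_sum_le _ _
        _ ≤ ∑ j ∈ Finset.range r, CH j r k * Λ z ^ (m r - ρ*(k:ℝ)) * ε⁻¹^N :=
            Finset.sum_le_sum (fun j _ => hCH j r k ε hε z)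
        _ = (∑ j ∈ Finset.range r, CH j r k) * Λ z ^ (m r - ρ*(k:ℝ)) * ε⁻¹^N := by
            rw [← Finset.sum_mul, ← Finset.sum_mul]
    have hb2 : ‖iteratedFDeriv ℝ k (fun w => ∑ j ∈ Finset.Ico r s, T j ε w) z‖ ≤
        2 * CM r k * Λ z ^ (m r - ρ*(k:ℝ)) * ε⁻¹^N := by
      have heq : iteratedFDeriv ℝ k (fun w => ∑ j ∈ Finset.Ico r s, T j ε w) z =
          ∑ j ∈ Finset.Ico r s, iteratedFDeriv ℝ k (T j ε) z := by
        have := iteratedFDeriv_sum (𝕜 := ℝ) (f := fun j => T j ε)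
          (u := Finset.Ico r s) (i := k)
          (fun j _ => (hTsm j ε hε).of_le (by exact_mod_cast le_top))
        rw [congrFun this z]
        simp
      rw [heq]
      exact FINBOUND (Finset.Ico r s) r k (fun j hj => (Finset.mem_Ico.1 hj).1) ε hε z
    have hb3 : ‖iteratedFDeriv ℝ k (fun w => ∑' i:ℕ, T (s+i) ε w) z‖ ≤
        2 * CM r k * Λ z ^ (m r - ρ*(k:ℝ)) * ε⁻¹^N := by
      rw [congrFun ((TAIL s hJs ε hε).2 k) z]
      exact TAILBOUND s r k hrs hJs ε hε z
    calc ‖(iteratedFDeriv ℝ k (fun w => ∑ j ∈ Finset.range r, (T j ε w - aj j ε w)) z +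
          iteratedFDeriv ℝ k (fun w => ∑ j ∈ Finset.Ico r s, T j ε w) z) +
          iteratedFDeriv ℝ k (fun w => ∑' i:ℕ, T (s+i) ε w) z‖
        ≤ ‖iteratedFDeriv ℝ k (fun w => ∑ j ∈ Finset.range r, (T j ε w - aj j ε w)) z‖ +
          ‖iteratedFDeriv ℝ k (fun w => ∑ j ∈ Finset.Ico r s, T j ε w) z‖ +
          ‖iteratedFDeriv ℝ k (fun w => ∑' i:ℕ, T (s+i) ε w) z‖ := norm_add₃_le
      _ ≤ ((∑ j ∈ Finset.range r, CH j r k) + 2 * CM r k + 2 * CM r k) *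
            Λ z ^ (m r - ρ*(k:ℝ)) * ε⁻¹^N := by
          nlinarith [hb1, hb2, hb3]
  -- ## SC basic lemmas
  have SCmono : ∀ (m1 m2 : ℝ) (f : ℝ → (Fin (2*n) → ℝ) → ℂ), m1 ≤ m2 →
      SC Λ ρ N m1 f → SC Λ ρ N m2 f := by
    intro m1 m2 f h12 hf
    refine ⟨hf.1, fun k => ?_⟩
    obtain ⟨c, hc⟩ := hf.2 k
    refine ⟨max c 0 * c₁ ^ (m1 - m2), fun ε hε z => ?_⟩
    have h1 : ‖iteratedFDeriv ℝ k (f ε) z‖ ≤ max c 0 * Λ z ^ (m1 - ρ*(k:ℝ)) * ε⁻¹^N := by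
      refine (hc ε hε z).trans ?_
      have h2 : (0:ℝ) < Λ z ^ (m1 - ρ*(k:ℝ)) := Real.rpow_pos_of_pos (hpos z) _
      have h3 := hεNpos ε hε
      exact mul_le_mul_of_nonneg_right
        (mul_le_mul_of_nonneg_right (le_max_left c 0) h2.le) h3.le
    refine h1.trans ?_
    have hsp : Λ z ^ (m1 - ρ*(k:ℝ)) = Λ z ^ (m1 - m2) * Λ z ^ (m2 - ρ*(k:ℝ)) := by
      rw [← Real.rpow_add (hpos z)]
      congr 1
      ring
    have hcc : Λ z ^ (m1 - m2) ≤ c₁ ^ (m1 - m2) := hrpow_c₁ z _ (by linarith)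
    have h4 := Real.rpow_pos_of_pos (hpos z) (m2 - ρ*(k:ℝ))
    have h5 := hεNpos ε hε
    rw [hsp]
    have h6 : (0:ℝ) ≤ max c 0 := le_max_right c 0
    have h7 := mul_le_mul_of_nonneg_left hcc h6
    calc max c 0 * (Λ z ^ (m1 - m2) * Λ z ^ (m2 - ρ*(k:ℝ))) * ε⁻¹^N
        = (max c 0 * Λ z ^ (m1 - m2)) * Λ z ^ (m2 - ρ*(k:ℝ)) * ε⁻¹^N := by ring
      _ ≤ (max c 0 * c₁ ^ (m1 - m2)) * Λ z ^ (m2 - ρ*(k:ℝ)) * ε⁻¹^N :=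
          mul_le_mul_of_nonneg_right (mul_le_mul_of_nonneg_right h7 h4.le) h5.le
  have SCsub : ∀ (m1 : ℝ) (f g : ℝ → (Fin (2*n) → ℝ) → ℂ),
      SC Λ ρ N m1 f → SC Λ ρ N m1 g → SC Λ ρ N m1 (fun ε z => f ε z - g ε z) := by
    intro m1 f g hf hg
    refine ⟨fun ε hε => (hf.1 ε hε).sub (hg.1 ε hε), fun k => ?_⟩
    obtain ⟨c, hc⟩ := hf.2 k
    obtain ⟨c', hc'⟩ := hg.2 k
    refine ⟨c + c', fun ε hε z => ?_⟩
    have heq : iteratedFDeriv ℝ k (fun z => f ε z - g ε z) z =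
        iteratedFDeriv ℝ k (f ε) z - iteratedFDeriv ℝ k (g ε) z :=
      iteratedFDeriv_sub_apply2 ((hf.1 ε hε).of_le (by exact_mod_cast le_top))
        ((hg.1 ε hε).of_le (by exact_mod_cast le_top))
    show ‖iteratedFDeriv ℝ k (fun z => f ε z - g ε z) z‖ ≤ _
    rw [heq]
    calc ‖iteratedFDeriv ℝ k (f ε) z - iteratedFDeriv ℝ k (g ε) z‖
        ≤ ‖iteratedFDeriv ℝ k (f ε) z‖ + ‖iteratedFDeriv ℝ k (g ε) z‖ := norm_sub_le _ _
      _ ≤ (c + c') * Λ z ^ (m1 - ρ*(k:ℝ)) * ε⁻¹^N := by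
          nlinarith [hc ε hε z, hc' ε hε z]
  -- ## conclusion
  refine ⟨a, hSC0, hREM, ?_⟩
  intro a' ha' m'
  obtain ⟨r0, hr0⟩ := (hlim.eventually (Filter.eventually_le_atBot m')).exists
  set r := max r0 1 with hrdef
  have hr1 : 1 ≤ r := le_max_right _ _
  have hmr : m r ≤ m' := le_trans (hmono.antitone (le_max_left r0 1)) hr0
  have h1 := hREM r hr1
  have h2 := ha' r hr1
  have h3 := SCsub (m r) _ _ h1 h2
  have heq : (fun ε z => (a ε z - ∑ j ∈ Finset.range r, aj j ε z) -
      (a' ε z - ∑ j ∈ Finset.range r, aj j ε z)) = fun ε z => a ε z - a' ε z := by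
    funext ε z
    ring
  rw [heq] at h3
  exact SCmono (m r) m' _ hmr h3


end main
end

section
/- Let (a_ε)_ε ∈ H𝒮^{m,l}_{Λ,ρ,N} be hypoelliptic and (b_ε)_ε ∈ 𝒮^{m'}_{Λ,ρ,0} with m' < l. Then the perturbed symbol a_ε + ε^N b_ε is again hypoelliptic in H𝒮^{m,l}_{Λ,ρ,N}: there exists R' > 0 and c > 0 such that |a_ε(z) + ε^N b_ε(z)| ≥ (c/2)·ε^N·Λ(z)^l for all |z| ≥ R' and ε ∈ (0,1], and for each γ ≠ 0 there is c_γ with |∂^γ(a_ε + ε^N b_ε)(z)| ≤ c_γ|a_ε(z) + ε^N b_ε(z)|Λ(z)^{−ρ|γ|} for |z| ≥ R', ε ∈ (0,1]. -/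
open Set

/-- Stability of hypoellipticity under perturbation: if `(a_ε)_ε ∈ H𝒮^{m,l}_{Λ,ρ,N}` and
`(b_ε)_ε ∈ 𝒮^{m'}_{Λ,ρ,0}` with `m' < l`, then `a_ε + ε^N b_ε` is hypoelliptic in
`H𝒮^{m,l}_{Λ,ρ,N}`. -/
theorem stmt12 {n : ℕ} (Λ : (Fin (2 * n) → ℝ) → ℝ) (hpos : ∀ z, 0 < Λ z)
    (μ cΛ : ℝ) (hμ : 0 < μ) (hcΛ : 0 < cΛ) (hlow : ∀ z, cΛ * jap z ^ μ ≤ Λ z)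
    (ρ : ℝ) (hρ : ρ ∈ Set.Ioc (0 : ℝ) 1) (m l m' : ℝ) (hlm : l ≤ m) (hm' : m' < l)
    (N : ℕ) (R : ℝ) (hR : 0 < R)
    (a b : ℝ → (Fin (2 * n) → ℝ) → ℂ)
    (hasm : ∀ ε ∈ Set.Ioc (0 : ℝ) 1, ContDiff ℝ (⊤ : ℕ∞) (a ε))
    (hbsm : ∀ ε ∈ Set.Ioc (0 : ℝ) 1, ContDiff ℝ (⊤ : ℕ∞) (b ε))
    (haS : ∀ k : ℕ, ∃ c : ℝ, ∀ ε ∈ Set.Ioc (0 : ℝ) 1, ∀ z,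
      ‖iteratedFDeriv ℝ k (a ε) z‖ ≤ c * Λ z ^ (m - ρ * (k : ℝ)) * ε⁻¹ ^ N)
    (c₀ : ℝ) (hc₀ : 0 < c₀)
    (halow : ∀ ε ∈ Set.Ioc (0 : ℝ) 1, ∀ z, R ≤ ‖z‖ → c₀ * Λ z ^ l * ε ^ N ≤ ‖a ε z‖)
    (hader : ∀ k : ℕ, ∃ c : ℝ, ∀ ε ∈ Set.Ioc (0 : ℝ) 1, ∀ z, R ≤ ‖z‖ →
      ‖iteratedFDeriv ℝ k (a ε) z‖ ≤ c * ‖a ε z‖ * Λ z ^ (-(ρ * (k : ℝ))))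
    (hbS : ∀ k : ℕ, ∃ c : ℝ, ∀ ε ∈ Set.Ioc (0 : ℝ) 1, ∀ z,
      ‖iteratedFDeriv ℝ k (b ε) z‖ ≤ c * Λ z ^ (m' - ρ * (k : ℝ))) :
    ∃ R' > (0 : ℝ), ∃ c' > (0 : ℝ),
      (∀ ε ∈ Set.Ioc (0 : ℝ) 1, ∀ z, R' ≤ ‖z‖ →
        c' * ε ^ N * Λ z ^ l ≤ ‖a ε z + ((ε ^ N : ℝ) : ℂ) * b ε z‖) ∧
      (∀ k : ℕ, 1 ≤ k → ∃ cγ : ℝ, ∀ ε ∈ Set.Ioc (0 : ℝ) 1, ∀ z, R' ≤ ‖z‖ →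
        ‖iteratedFDeriv ℝ k (fun w => a ε w + ((ε ^ N : ℝ) : ℂ) * b ε w) z‖ ≤
          cγ * ‖a ε z + ((ε ^ N : ℝ) : ℂ) * b ε z‖ * Λ z ^ (-(ρ * (k : ℝ)))) := by
  obtain ⟨cb0, hcb0⟩ := hbS 0
  set cb0' : ℝ := max cb0 1 with hcb0'def
  have hcb0'pos : (0:ℝ) < cb0' := lt_of_lt_of_le one_pos (le_max_right _ _)
  have hb0 : ∀ ε ∈ Set.Ioc (0:ℝ) 1, ∀ z, ‖b ε z‖ ≤ cb0' * Λ z ^ m' := by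
    intro ε hε z
    have h := hcb0 ε hε z
    rw [norm_iteratedFDeriv_zero] at h
    have he : m' - ρ * ((0:ℕ):ℝ) = m' := by push_cast; ring
    rw [he] at h
    exact h.trans (mul_le_mul_of_nonneg_right (le_max_left _ _)
      (Real.rpow_nonneg (hpos z).le m'))
  have hlm' : (0:ℝ) < l - m' := by linarith
  set T : ℝ := (2 * cb0' / c₀) ^ (1 / (l - m')) with hTdef
  have hbase : (0:ℝ) < 2 * cb0' / c₀ := by positivity
  have hTpos : 0 < T := Real.rpow_pos_of_pos hbase _
  set M : ℝ := max 1 T with hMdef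
  have hMpos : (0:ℝ) < M := lt_of_lt_of_le one_pos (le_max_left _ _)
  set r : ℝ := (M / cΛ) ^ (1 / μ) with hrdef
  have hrpos : 0 < r := Real.rpow_pos_of_pos (by positivity) _
  set R' : ℝ := max R r with hR'def
  have hR'pos : 0 < R' := lt_of_lt_of_le hR (le_max_left _ _)
  -- for ‖z‖ ≥ R', Λ z ≥ M
  have hΛM : ∀ z : Fin (2 * n) → ℝ, R' ≤ ‖z‖ → M ≤ Λ z := by
    intro z hz
    have hzr : r ≤ ‖z‖ := le_trans (le_max_right R r) hz
    have hz0 : (0:ℝ) ≤ ‖z‖ := norm_nonneg z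
    have hMc : M / cΛ ≤ ‖z‖ ^ μ := by
      have h1 : M / cΛ = ((M / cΛ) ^ (1/μ)) ^ μ := by
        rw [← Real.rpow_mul (by positivity), one_div_mul_cancel hμ.ne', Real.rpow_one]
      rw [h1]
      exact Real.rpow_le_rpow hrpos.le hzr hμ.le
    have hjap : ‖z‖ ≤ jap z := by
      unfold jap
      have : ‖z‖ = Real.sqrt (‖z‖ ^ 2) := by rw [Real.sqrt_sq hz0]
      rw [this]
      exact Real.sqrt_le_sqrt (by nlinarith)
    have hjm : ‖z‖ ^ μ ≤ jap z ^ μ := Real.rpow_le_rpow hz0 hjap hμ.le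
    have := hlow z
    have hM : M ≤ cΛ * ‖z‖ ^ μ := by
      rw [div_le_iff₀ hcΛ] at hMc; linarith [hMc]
    have h4 := mul_le_mul_of_nonneg_left hjm hcΛ.le
    linarith [hlow z]
  have h1Λ : ∀ z : Fin (2 * n) → ℝ, R' ≤ ‖z‖ → (1:ℝ) ≤ Λ z := fun z hz =>
    le_trans (le_max_left 1 T) (hΛM z hz)
  have hkey : ∀ z : Fin (2 * n) → ℝ, R' ≤ ‖z‖ →
      cb0' * Λ z ^ m' ≤ c₀ / 2 * Λ z ^ l := by
    intro z hz
    have hTΛ : T ≤ Λ z := le_trans (le_max_right 1 T) (hΛM z hz)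
    have hpow : 2 * cb0' / c₀ ≤ Λ z ^ (l - m') := by
      have h1 : 2 * cb0' / c₀ = T ^ (l - m') := by
        rw [hTdef, ← Real.rpow_mul hbase.le, one_div_mul_cancel hlm'.ne', Real.rpow_one]
      rw [h1]
      exact Real.rpow_le_rpow hTpos.le hTΛ hlm'.le
    have hsplit : Λ z ^ l = Λ z ^ m' * Λ z ^ (l - m') := by
      rw [← Real.rpow_add (hpos z)]; ring_nf
    rw [hsplit]
    have hm'pos : 0 < Λ z ^ m' := Real.rpow_pos_of_pos (hpos z) m'
    have h2 := mul_le_mul_of_nonneg_left hpow hm'pos.le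
    have h3 := mul_le_mul_of_nonneg_left h2 (by positivity : (0:ℝ) ≤ c₀ / 2)
    have h4 : c₀ / 2 * (Λ z ^ m' * (2 * cb0' / c₀)) = cb0' * Λ z ^ m' := by
      field_simp
    linarith [h3]
  -- main lower bound
  have key : ∀ ε ∈ Set.Ioc (0:ℝ) 1, ∀ z, R' ≤ ‖z‖ →
      c₀ / 2 * ε ^ N * Λ z ^ l ≤ ‖a ε z + ((ε ^ N : ℝ) : ℂ) * b ε z‖ := by
    intro ε hε z hz
    have hεN : 0 < ε ^ N := pow_pos hε.1 N
    have hzR : R ≤ ‖z‖ := le_trans (le_max_left R r) hz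
    have hA := halow ε hε z hzR
    have hB := hb0 ε hε z
    have hnorm : ‖((ε ^ N : ℝ) : ℂ) * b ε z‖ = ε ^ N * ‖b ε z‖ := by
      rw [norm_mul, Complex.norm_real, Real.norm_eq_abs, abs_of_pos hεN]
    have htri : ‖a ε z‖ ≤ ‖a ε z + ((ε ^ N : ℝ) : ℂ) * b ε z‖
        + ‖((ε ^ N : ℝ) : ℂ) * b ε z‖ := by
      have h := norm_add_le (a ε z + ((ε ^ N : ℝ) : ℂ) * b ε z)
        (-(((ε ^ N : ℝ) : ℂ) * b ε z))
      simpa using h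
    have hk := hkey z hz
    have hB' := mul_le_mul_of_nonneg_left hB hεN.le
    have hk' := mul_le_mul_of_nonneg_left hk hεN.le
    rw [hnorm] at htri
    linarith [htri, hA, hB', hk']
  refine ⟨R', hR'pos, c₀ / 2, by positivity, key, ?_⟩
  intro k hk
  obtain ⟨ca, hca⟩ := hader k
  obtain ⟨cb, hcb⟩ := hbS k
  refine ⟨2 * max ca 0 + 2 * max cb 0 / c₀, ?_⟩
  intro ε hε z hz
  have hεN : 0 < ε ^ N := pow_pos hε.1 N
  have hzR : R ≤ ‖z‖ := le_trans (le_max_left R r) hz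
  have hsk := key ε hε z hz
  set s : ℂ := a ε z + ((ε ^ N : ℝ) : ℂ) * b ε z with hsdef
  have hsnn : (0:ℝ) ≤ ‖s‖ := norm_nonneg _
  have hΛnn : (0:ℝ) ≤ Λ z ^ (-(ρ * (k:ℝ))) := Real.rpow_nonneg (hpos z).le _
  -- rewrite the iterated derivative of the sum
  have hdiff_a : ContDiff ℝ (k : ℕ∞) (a ε) := (hasm ε hε).of_le (mod_cast le_top)
  have hdiff_b : ContDiff ℝ (k : ℕ∞) (b ε) := (hbsm ε hε).of_le (mod_cast le_top)
  have hfeq : (fun w => a ε w + ((ε ^ N : ℝ) : ℂ) * b ε w)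
      = (a ε + (ε ^ N : ℝ) • b ε) := by
    funext w
    simp [Pi.add_apply, Pi.smul_apply, Complex.real_smul]
  have hsm : ContDiff ℝ (k : ℕ∞) ((ε ^ N : ℝ) • b ε) := by
    have h := hdiff_b.const_smul ((ε ^ N : ℝ))
    simpa [Pi.smul_def] using h
  have hadd : iteratedFDeriv ℝ k (a ε + (ε ^ N : ℝ) • b ε) z
      = iteratedFDeriv ℝ k (a ε) z + iteratedFDeriv ℝ k ((ε ^ N : ℝ) • b ε) z :=
    iteratedFDeriv_add_apply hdiff_a.contDiffAt hsm.contDiffAt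
  have hsmul : iteratedFDeriv ℝ k ((ε ^ N : ℝ) • b ε) z
      = (ε ^ N : ℝ) • iteratedFDeriv ℝ k (b ε) z :=
    iteratedFDeriv_const_smul_apply hdiff_b.contDiffAt
  have hD : iteratedFDeriv ℝ k (fun w => a ε w + ((ε ^ N : ℝ) : ℂ) * b ε w) z
      = iteratedFDeriv ℝ k (a ε) z + (ε ^ N : ℝ) • iteratedFDeriv ℝ k (b ε) z := by
    rw [hfeq, hadd, hsmul]
  rw [hD]
  have hDa := hca ε hε z hzR
  have hDb := hcb ε hε z
  have hDa' : ‖iteratedFDeriv ℝ k (a ε) z‖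
      ≤ max ca 0 * ‖a ε z‖ * Λ z ^ (-(ρ * (k:ℝ))) :=
    hDa.trans (mul_le_mul_of_nonneg_right
      (mul_le_mul_of_nonneg_right (le_max_left ca 0) (norm_nonneg _)) hΛnn)
  have hDb' : ‖iteratedFDeriv ℝ k (b ε) z‖ ≤ max cb 0 * Λ z ^ (m' - ρ * (k:ℝ)) :=
    hDb.trans (mul_le_mul_of_nonneg_right (le_max_left cb 0)
      (Real.rpow_nonneg (hpos z).le _))
  -- ‖a‖ ≤ 2‖s‖
  have hanorm : ‖a ε z‖ ≤ 2 * ‖s‖ := by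
    have htri : ‖a ε z‖ ≤ ‖s‖ + ‖((ε ^ N : ℝ) : ℂ) * b ε z‖ := by
      have h := norm_add_le s (-(((ε ^ N : ℝ) : ℂ) * b ε z))
      simpa [hsdef] using h
    have hnorm : ‖((ε ^ N : ℝ) : ℂ) * b ε z‖ = ε ^ N * ‖b ε z‖ := by
      rw [norm_mul, Complex.norm_real, Real.norm_eq_abs, abs_of_pos hεN]
    rw [hnorm] at htri
    have hB' := mul_le_mul_of_nonneg_left (hb0 ε hε z) hεN.le
    have hk' := mul_le_mul_of_nonneg_left (hkey z hz) hεN.le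
    linarith [htri, hB', hk', hsk]
  -- ε^N Λ^{m'-ρk} ≤ (2/c₀) ‖s‖ Λ^{-ρk}
  have hεΛ : ε ^ N * Λ z ^ (m' - ρ * (k:ℝ))
      ≤ 2 / c₀ * ‖s‖ * Λ z ^ (-(ρ * (k:ℝ))) := by
    have hsplit : Λ z ^ (m' - ρ * (k:ℝ)) = Λ z ^ m' * Λ z ^ (-(ρ * (k:ℝ))) := by
      rw [← Real.rpow_add (hpos z)]; ring_nf
    have hml : Λ z ^ m' ≤ Λ z ^ l :=
      Real.rpow_le_rpow_of_exponent_le (h1Λ z hz) hm'.le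
    have h1 : ε ^ N * Λ z ^ l ≤ 2 / c₀ * ‖s‖ := by
      rw [div_mul_eq_mul_div, le_div_iff₀ hc₀]
      linarith [hsk]
    calc ε ^ N * Λ z ^ (m' - ρ * (k:ℝ))
        = (ε ^ N * Λ z ^ m') * Λ z ^ (-(ρ * (k:ℝ))) := by rw [hsplit]; ring
      _ ≤ (ε ^ N * Λ z ^ l) * Λ z ^ (-(ρ * (k:ℝ))) :=
          mul_le_mul_of_nonneg_right (mul_le_mul_of_nonneg_left hml hεN.le) hΛnn
      _ ≤ (2 / c₀ * ‖s‖) * Λ z ^ (-(ρ * (k:ℝ))) :=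
          mul_le_mul_of_nonneg_right h1 hΛnn
  have hnormsum : ‖iteratedFDeriv ℝ k (a ε) z + (ε ^ N : ℝ) • iteratedFDeriv ℝ k (b ε) z‖
      ≤ ‖iteratedFDeriv ℝ k (a ε) z‖ + ε ^ N * ‖iteratedFDeriv ℝ k (b ε) z‖ := by
    refine (norm_add_le _ _).trans ?_
    have hns : ‖(ε ^ N : ℝ) • iteratedFDeriv ℝ k (b ε) z‖
        = ε ^ N * ‖iteratedFDeriv ℝ k (b ε) z‖ := by
      rw [norm_smul (ε ^ N : ℝ) (iteratedFDeriv ℝ k (b ε) z), Real.norm_eq_abs,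
        abs_of_pos hεN]
    rw [hns]
  have h2 : ε ^ N * ‖iteratedFDeriv ℝ k (b ε) z‖
      ≤ max cb 0 * (2 / c₀ * ‖s‖ * Λ z ^ (-(ρ * (k:ℝ)))) := by
    calc ε ^ N * ‖iteratedFDeriv ℝ k (b ε) z‖
        ≤ ε ^ N * (max cb 0 * Λ z ^ (m' - ρ * (k:ℝ))) :=
          mul_le_mul_of_nonneg_left hDb' hεN.le
      _ = max cb 0 * (ε ^ N * Λ z ^ (m' - ρ * (k:ℝ))) := by ring
      _ ≤ max cb 0 * (2 / c₀ * ‖s‖ * Λ z ^ (-(ρ * (k:ℝ)))) :=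
          mul_le_mul_of_nonneg_left hεΛ (le_max_right cb 0)
  have h3 : max ca 0 * ‖a ε z‖ * Λ z ^ (-(ρ * (k:ℝ)))
      ≤ max ca 0 * (2 * ‖s‖) * Λ z ^ (-(ρ * (k:ℝ))) :=
    mul_le_mul_of_nonneg_right
      (mul_le_mul_of_nonneg_left hanorm (le_max_right ca 0)) hΛnn
  calc ‖iteratedFDeriv ℝ k (a ε) z + (ε ^ N : ℝ) • iteratedFDeriv ℝ k (b ε) z‖
      ≤ ‖iteratedFDeriv ℝ k (a ε) z‖ + ε ^ N * ‖iteratedFDeriv ℝ k (b ε) z‖ := hnormsum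
    _ ≤ max ca 0 * (2 * ‖s‖) * Λ z ^ (-(ρ * (k:ℝ)))
        + max cb 0 * (2 / c₀ * ‖s‖ * Λ z ^ (-(ρ * (k:ℝ)))) := by
        have := hDa'.trans h3
        linarith [h2, this]
    _ = (2 * max ca 0 + 2 * max cb 0 / c₀) * ‖s‖ * Λ z ^ (-(ρ * (k:ℝ))) := by ring
end

section
/- Let (a_ε)_ε ∈ 𝒮^m_{Λ,ρ} be a symbol family on ℝⁿ×ℝⁿ and τ ∈ ℝⁿ. Then b_ε(x,y,ξ) := a_ε((1−τ)x + τy, ξ) defines an amplitude in 𝒮̄^m_{Λ,ρ}: for all α, β, γ ∈ ℕⁿ there exist N ∈ ℕ, c > 0 and m' ∈ ℝ (independent of α,β,γ) such that |∂^α_ξ∂^β_x∂^γ_y b_ε(x,y,ξ)| ≤ c·Λ(x,ξ)^m·⟨x−y⟩^{m'}·(1 + Λ(x,ξ)⟨x−y⟩^{−1})^{−ρ|α+β+γ|}·ε^{−N} for all (x,y,ξ) and ε ∈ (0,1]. -/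
/-!
The substitution `(x, y, ξ) ↦ ((1 - τ) x + τ y, ξ)` is a continuous linear map `L`, so the
chain rule gives `‖Dᵏ(a ∘ L)(p)‖ ≤ ‖L‖ᵏ ‖Dᵏa(L p)‖`, and everything reduces to comparing the
weight at `L p` with the weight at `(x, ξ)`. These two points differ by `(τ (y - x), 0)`, so by
temperance (used in both directions) `Λ(L p)` and `Λ(x, ξ)` agree up to a factor `≲ ⟨x - y⟩`,
which handles `Λ(L p)ᵐ` at the price of `⟨x - y⟩^|m|`. For the gain `Λ(L p)^(-ρk)` one needs in
addition that `Λ` is bounded below, which is the scaling hypothesis at `t = 0`; then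
`1 + Λ(x, ξ) ⟨x - y⟩⁻¹ ≲ Λ(L p)`.
-/

open Set

lemma jap_zero {V : Type*} [NormedAddCommGroup V] : jap (0 : V) = 1 := by
  simp [jap]

lemma jap_sub_comm {V : Type*} [NormedAddCommGroup V] (x y : V) : jap (x - y) = jap (y - x) := by
  rw [jap, jap, norm_sub_rev]

lemma jap_le_mul_jap {V W : Type*} [NormedAddCommGroup V] [NormedAddCommGroup W]
    {w : V} {v : W} {t : ℝ} (ht : 1 ≤ t) (h : ‖w‖ ≤ t * ‖v‖) : jap w ≤ t * jap v := by
  have hsq : 1 + ‖w‖ ^ 2 ≤ t ^ 2 * (1 + ‖v‖ ^ 2) := by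
    nlinarith [norm_nonneg w, norm_nonneg v]
  calc jap w ≤ Real.sqrt (t ^ 2 * (1 + ‖v‖ ^ 2)) := Real.sqrt_le_sqrt hsq
    _ = t * jap v := by rw [Real.sqrt_mul (by positivity), Real.sqrt_sq (by linarith), jap]

theorem ContinuousLinearMap.norm_iteratedFDeriv_comp_right_le {𝕜 E F G : Type*}
    [NontriviallyNormedField 𝕜] [NormedAddCommGroup E] [NormedSpace 𝕜 E]
    [NormedAddCommGroup F] [NormedSpace 𝕜 F] [NormedAddCommGroup G] [NormedSpace 𝕜 G]
    {n : WithTop ℕ∞} (g : G →L[𝕜] E) {f : E → F} (hf : ContDiff 𝕜 n f) (x : G) {i : ℕ}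
    (hi : i ≤ n) :
    ‖iteratedFDeriv 𝕜 i (f ∘ g) x‖ ≤ ‖iteratedFDeriv 𝕜 i f (g x)‖ * ‖g‖ ^ i := by
  rw [g.iteratedFDeriv_comp_right hf x hi]
  simpa using (iteratedFDeriv 𝕜 i f (g x)).norm_compContinuousLinearMap_le fun _ => g

section WeightComparison

lemma rpow_le_rpow_abs_mul_of_le_mul {x y B : ℝ} (hx : 0 < x) (hy : 0 < y)
    (hxy : x ≤ B * y) (hyx : y ≤ B * x) (m : ℝ) : x ^ m ≤ B ^ |m| * y ^ m := by
  have hB : 0 < B := pos_of_mul_pos_left (hx.trans_le hxy) hy.le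
  rcases le_or_gt 0 m with hm | hm
  · rw [abs_of_nonneg hm, ← Real.mul_rpow hB.le hy.le]
    exact Real.rpow_le_rpow hx.le hxy hm
  · have hyx' : y / B ≤ x := by rwa [div_le_iff₀' hB]
    calc x ^ m ≤ (y / B) ^ m := Real.rpow_le_rpow_of_nonpos (by positivity) hyx' hm.le
      _ = B ^ |m| * y ^ m := by
        rw [abs_of_neg hm, Real.div_rpow hy.le hB.le, Real.rpow_neg hB.le]
        ring

lemma rpow_neg_le_mul_one_add_rpow_neg {x y δ D s : ℝ} (hδ : 0 < δ) (hδx : δ ≤ x)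
    (hy : 0 ≤ y) (hD : 0 ≤ D) (hyx : y ≤ D * x) (hs : 0 ≤ s) :
    x ^ (-s) ≤ (δ⁻¹ + D) ^ s * (1 + y) ^ (-s) := by
  have hx : 0 < x := hδ.trans_le hδx
  have hA : 0 < δ⁻¹ + D := by positivity
  have hone : 1 ≤ δ⁻¹ * x := by rwa [inv_mul_eq_div, one_le_div hδ]
  have hle : 1 + y ≤ (δ⁻¹ + D) * x := by linarith [add_mul δ⁻¹ D x]
  calc x ^ (-s) = (δ⁻¹ + D) ^ s * ((δ⁻¹ + D) * x) ^ (-s) := by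
        rw [Real.mul_rpow hA.le hx.le, ← mul_assoc, Real.rpow_neg hA.le,
          mul_inv_cancel₀ (Real.rpow_pos_of_pos hA s).ne', one_mul]
    _ ≤ (δ⁻¹ + D) ^ s * (1 + y) ^ (-s) := by
        gcongr _ * ?_
        exact Real.rpow_le_rpow_of_nonpos (by positivity) hle (neg_nonpos.mpr hs)

variable {E : Type*} [NormedAddCommGroup E] {Λ : E → ℝ} {C : ℝ}

lemma one_le_of_temperate (hpos : ∀ z, 0 < Λ z) (htemp : ∀ z ζ, Λ z ≤ C * Λ ζ * jap (z - ζ)) :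
    1 ≤ C := by
  have h := htemp 0 0
  rw [sub_zero, jap_zero, mul_one] at h
  exact (le_mul_iff_one_le_left (hpos 0)).mp h

lemma temperate_rpow_le {δ K J : ℝ} (hpos : ∀ z, 0 < Λ z)
    (htemp : ∀ z ζ, Λ z ≤ C * Λ ζ * jap (z - ζ)) (hδ : 0 < δ) (hδΛ : ∀ z, δ ≤ Λ z)
    {z ζ : E} (hJ : 0 < J) (hzζ : jap (z - ζ) ≤ K * J) (m : ℝ) {s : ℝ} (hs : 0 ≤ s) :
    Λ z ^ (m - s) ≤ (C * K) ^ |m| * (δ⁻¹ + C * K) ^ s *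
      (Λ ζ ^ m * J ^ |m| * (1 + Λ ζ * J⁻¹) ^ (-s)) := by
  have hC : 0 ≤ C := zero_le_one.trans (one_le_of_temperate hpos htemp)
  have hK : 0 ≤ K := (pos_of_mul_pos_left ((one_pos.trans_le (one_le_jap _)).trans_le hzζ) hJ.le).le
  have hzζ' : Λ z ≤ C * K * J * Λ ζ := by
    calc Λ z ≤ C * Λ ζ * jap (z - ζ) := htemp z ζ
      _ ≤ C * Λ ζ * (K * J) := by gcongr; exact mul_nonneg hC (hpos ζ).le
      _ = C * K * J * Λ ζ := by ring
  have hζz : Λ ζ ≤ C * K * J * Λ z := by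
    calc Λ ζ ≤ C * Λ z * jap (ζ - z) := htemp ζ z
      _ ≤ C * Λ z * (K * J) := by
          rw [jap_sub_comm]; gcongr; exact mul_nonneg hC (hpos z).le
      _ = C * K * J * Λ z := by ring
  have hpow : Λ z ^ m ≤ (C * K) ^ |m| * (Λ ζ ^ m * J ^ |m|) := by
    have := rpow_le_rpow_abs_mul_of_le_mul (hpos z) (hpos ζ) hzζ' hζz m
    rwa [Real.mul_rpow (mul_nonneg hC hK) hJ.le, mul_assoc, mul_comm (J ^ |m|)] at this
  have hgain : Λ z ^ (-s) ≤ (δ⁻¹ + C * K) ^ s * (1 + Λ ζ * J⁻¹) ^ (-s) := by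
    refine rpow_neg_le_mul_one_add_rpow_neg hδ (hδΛ z)
      (mul_nonneg (hpos ζ).le (inv_nonneg.mpr hJ.le)) (mul_nonneg hC hK) ?_ hs
    rw [mul_inv_le_iff₀ hJ]
    linarith
  calc Λ z ^ (m - s) = Λ z ^ m * Λ z ^ (-s) := by
        rw [sub_eq_add_neg, Real.rpow_add (hpos z)]
    _ ≤ (C * K) ^ |m| * (Λ ζ ^ m * J ^ |m|) * ((δ⁻¹ + C * K) ^ s * (1 + Λ ζ * J⁻¹) ^ (-s)) :=
        mul_le_mul hpow hgain (Real.rpow_nonneg (hpos z).le _)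
          ((Real.rpow_nonneg (hpos z).le m).trans hpow)
    _ = _ := by ring

end WeightComparison

section Interpolation

variable {ι : Type*} [Fintype ι]

noncomputable def interpolationCLM (τ : ι → ℝ) :
    (ι → ℝ) × (ι → ℝ) × (ι → ℝ) →L[ℝ] (ι → ℝ) × (ι → ℝ) :=
  LinearMap.toContinuousLinearMap
    { toFun := fun q => (fun i => (1 - τ i) * q.1 i + τ i * q.2.1 i, q.2.2)
      map_add' := fun p q => Prod.ext (funext fun i => by simp; ring) rfl
      map_smul' := fun c p => Prod.ext (funext fun i => by simp; ring) rfl }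

lemma norm_interpolationCLM_sub_le (τ : ι → ℝ) (p : (ι → ℝ) × (ι → ℝ) × (ι → ℝ)) :
    ‖interpolationCLM τ p - (p.1, p.2.2)‖ ≤ ‖τ‖ * ‖p.1 - p.2.1‖ := by
  have hdiff : interpolationCLM τ p - (p.1, p.2.2) = (τ * (p.2.1 - p.1), 0) :=
    Prod.ext (funext fun i => by simp [interpolationCLM]; ring) (sub_self _)
  rw [hdiff, Prod.norm_mk, norm_zero, norm_sub_rev p.1]
  exact max_le (norm_mul_le _ _) (by positivity)

end Interpolation

theorem stmt17_general {n : ℕ} (Λ : (Fin n → ℝ) × (Fin n → ℝ) → ℝ) (hpos : ∀ z, 0 < Λ z)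
    (C : ℝ) (htemp : ∀ z ζ, Λ z ≤ C * Λ ζ * jap (z - ζ))
    (hscale : ∀ t : (Fin n → ℝ) × (Fin n → ℝ), ∃ c > (0 : ℝ),
      ∀ z : (Fin n → ℝ) × (Fin n → ℝ), Λ (t.1 * z.1, t.2 * z.2) ≤ c * Λ z)
    (m ρ : ℝ) (hρ : ρ ∈ Set.Ioc (0 : ℝ) 1)
    (a : ℝ → (Fin n → ℝ) × (Fin n → ℝ) → ℂ)
    (hsm : ∀ ε ∈ Set.Ioc (0 : ℝ) 1, ContDiff ℝ (⊤ : ℕ∞) (a ε))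
    (ha : ∀ k : ℕ, ∃ N : ℕ, ∃ c : ℝ, ∀ ε ∈ Set.Ioc (0 : ℝ) 1, ∀ z,
      ‖iteratedFDeriv ℝ k (a ε) z‖ ≤ c * Λ z ^ (m - ρ * (k : ℝ)) * ε⁻¹ ^ N)
    (τ : Fin n → ℝ) :
    ∃ m' : ℝ, ∀ k : ℕ, ∃ N : ℕ, ∃ c : ℝ, ∀ ε ∈ Set.Ioc (0 : ℝ) 1,
      ∀ p : (Fin n → ℝ) × (Fin n → ℝ) × (Fin n → ℝ),
      ‖iteratedFDeriv ℝ k (fun q : (Fin n → ℝ) × (Fin n → ℝ) × (Fin n → ℝ) =>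
          a ε ((fun i => (1 - τ i) * q.1 i + τ i * q.2.1 i), q.2.2)) p‖ ≤
        c * Λ (p.1, p.2.2) ^ m * jap (p.1 - p.2.1) ^ m' *
          (1 + Λ (p.1, p.2.2) * (jap (p.1 - p.2.1))⁻¹) ^ (-(ρ * (k : ℝ))) *
          ε⁻¹ ^ N := by
  obtain ⟨c₀, hc₀, hscale₀⟩ := hscale 0
  have hδΛ : ∀ z, Λ 0 / c₀ ≤ Λ z := fun z =>
    div_le_of_le_mul₀ hc₀.le (hpos z).le (by simpa [mul_comm, ← Prod.zero_eq_mk] using hscale₀ z)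
  set L := interpolationCLM τ
  set K := max 1 ‖τ‖
  refine ⟨|m|, fun k => ?_⟩
  obtain ⟨N, c, hc⟩ := ha k
  refine ⟨N, max c 0 * ‖L‖ ^ k * ((C * K) ^ |m| * ((Λ 0 / c₀)⁻¹ + C * K) ^ (ρ * k)), ?_⟩
  intro ε hε p
  have hjap : jap (L p - (p.1, p.2.2)) ≤ K * jap (p.1 - p.2.1) :=
    jap_le_mul_jap (le_max_left _ _) ((norm_interpolationCLM_sub_le τ p).trans
      (by gcongr; exact le_max_right _ _))
  have hweight := temperate_rpow_le hpos htemp (div_pos (hpos 0) hc₀) hδΛ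
    (one_pos.trans_le (one_le_jap _)) hjap m (by have := hρ.1; positivity : 0 ≤ ρ * k)
  have hderiv : ‖iteratedFDeriv ℝ k (a ε) (L p)‖ ≤
      max c 0 * Λ (L p) ^ (m - ρ * k) * ε⁻¹ ^ N :=
    (hc ε hε (L p)).trans <| mul_le_mul_of_nonneg_right
      (mul_le_mul_of_nonneg_right (le_max_left _ _) (Real.rpow_nonneg (hpos _).le _))
      (pow_nonneg (inv_nonneg.mpr hε.1.le) N)
  calc ‖iteratedFDeriv ℝ k (a ε ∘ L) p‖
      ≤ ‖iteratedFDeriv ℝ k (a ε) (L p)‖ * ‖L‖ ^ k :=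
        L.norm_iteratedFDeriv_comp_right_le (hsm ε hε) p (by exact_mod_cast le_top)
    _ ≤ max c 0 * ε⁻¹ ^ N * ‖L‖ ^ k * Λ (L p) ^ (m - ρ * k) :=
        (mul_le_mul_of_nonneg_right hderiv (by positivity)).trans_eq (by ring)
    _ ≤ _ := by
        have := hε.1
        grw [hweight]
        exact le_of_eq (by ring)

/-- If `(a_ε)_ε ∈ 𝒮^m_{Λ,ρ}` then `b_ε(x,y,ξ) = a_ε((1−τ)x+τy, ξ)` is an amplitude in
`𝒮̄^m_{Λ,ρ}` with a uniform `m'` independent of the order of derivatives. -/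
theorem stmt17 {n : ℕ} (Λ : (Fin n → ℝ) × (Fin n → ℝ) → ℝ) (hpos : ∀ z, 0 < Λ z)
    (C : ℝ) (hC : 0 < C) (htemp : ∀ z ζ, Λ z ≤ C * Λ ζ * jap (z - ζ))
    (hscale : ∀ t : (Fin n → ℝ) × (Fin n → ℝ), ∃ c > (0 : ℝ),
      ∀ z : (Fin n → ℝ) × (Fin n → ℝ), Λ (t.1 * z.1, t.2 * z.2) ≤ c * Λ z)
    (m ρ : ℝ) (hρ : ρ ∈ Set.Ioc (0 : ℝ) 1)
    (a : ℝ → (Fin n → ℝ) × (Fin n → ℝ) → ℂ)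
    (hsm : ∀ ε ∈ Set.Ioc (0 : ℝ) 1, ContDiff ℝ (⊤ : ℕ∞) (a ε))
    (ha : ∀ k : ℕ, ∃ N : ℕ, ∃ c : ℝ, ∀ ε ∈ Set.Ioc (0 : ℝ) 1, ∀ z,
      ‖iteratedFDeriv ℝ k (a ε) z‖ ≤ c * Λ z ^ (m - ρ * (k : ℝ)) * ε⁻¹ ^ N)
    (τ : Fin n → ℝ) :
    ∃ m' : ℝ, ∀ k : ℕ, ∃ N : ℕ, ∃ c : ℝ, ∀ ε ∈ Set.Ioc (0 : ℝ) 1,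
      ∀ p : (Fin n → ℝ) × (Fin n → ℝ) × (Fin n → ℝ),
      ‖iteratedFDeriv ℝ k (fun q : (Fin n → ℝ) × (Fin n → ℝ) × (Fin n → ℝ) =>
          a ε ((fun i => (1 - τ i) * q.1 i + τ i * q.2.1 i), q.2.2)) p‖ ≤
        c * Λ (p.1, p.2.2) ^ m * jap (p.1 - p.2.1) ^ m' *
          (1 + Λ (p.1, p.2.2) * (jap (p.1 - p.2.1))⁻¹) ^ (-(ρ * (k : ℝ))) *
          ε⁻¹ ^ N :=
  stmt17_general Λ hpos C htemp hscale m ρ hρ a hsm ha τ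
end

section
/- Let φ₁, φ₂ ∈ 𝒮(ℝⁿ) both satisfy ∫φᵢ = 1 and ∫x^αφᵢ(x)dx = 0 for all α ≠ 0; equivalently φ̂₁(0) = φ̂₂(0) = 1 and ∂^α(φ̂₁ − φ̂₂)(0) = 0 for all α. Let (g_ε)_ε be a net of smooth functions with: there is N with sup_ε ε^N‖x^α∂^β g_ε‖_{L^∞} < ∞ for all α, β, and let (u_ε)_ε ∈ ℰ_τ(ℝⁿ). Then the net of numbers I_ε = ∫_{ℝⁿ} g_ε(x) u_ε(x)(φ̂₁(εx) − φ̂₂(εx)) dx is negligible: for every q ∈ ℕ, sup_{ε∈(0,1]} ε^{−q}|I_ε| < ∞. -/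
/-!
Let `ψ = Φ₁ - Φ₂`. A Schwartz function all of whose derivatives vanish at `0` satisfies
`‖ψ y‖ ≤ C ‖y‖ ^ m` for every `m`: by induction on `m`, simultaneously for all orders `k`, the mean
value theorem on the ball of radius `‖y‖` turns a bound `C ‖z‖ ^ m` on the derivative of order
`k + 1` into a bound `C ‖y‖ ^ (m + 1)` on the derivative of order `k`, the case `m = 0` being the
boundedness of all derivatives. Hence `‖ψ (ε x)‖ ≤ C ε ^ m ⟨x⟩ ^ m`. Against this, `u_ε` costs
`ε ^ (-M) ⟨x⟩ ^ M` and `g_ε` absorbs any power of `⟨x⟩` at the cost `ε ^ (-N)`, so with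
`m = q + M + N` the integrand is bounded by `C ε ^ q ⟨x⟩ ^ (-(n + 1))`, which is integrable.
-/

open Set MeasureTheory

section JapaneseBracket

variable {V : Type*} [NormedAddCommGroup V]

lemma jap_pos (x : V) : 0 < jap x :=
  Real.sqrt_pos.2 (by positivity)

lemma norm_le_jap_s19 (x : V) : ‖x‖ ≤ jap x :=
  Real.le_sqrt_of_sq_le (by linarith)

lemma jap_le_one_add_norm (x : V) : jap x ≤ 1 + ‖x‖ := by
  rw [jap, Real.sqrt_le_iff]
  constructor <;> nlinarith [norm_nonneg x]

lemma jap_pow_mul_le (x : V) {y A B : ℝ} (hy : 0 ≤ y) {a : ℕ} (h₀ : y ≤ A)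
    (ha : ‖x‖ ^ a * y ≤ B) : jap x ^ a * y ≤ 2 ^ a * (A + B) :=
  calc jap x ^ a * y ≤ (1 + ‖x‖) ^ a * y := by
        gcongr; exacts [(jap_pos x).le, jap_le_one_add_norm x]
    _ ≤ 2 ^ (a - 1) * (1 ^ a + ‖x‖ ^ a) * y := by
        gcongr; exact add_pow_le zero_le_one (norm_nonneg x) a
    _ ≤ 2 ^ a * (1 ^ a + ‖x‖ ^ a) * y := by gcongr; exacts [one_le_two, Nat.sub_le a 1]
    _ = 2 ^ a * (y + ‖x‖ ^ a * y) := by ring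
    _ ≤ 2 ^ a * (A + B) := by gcongr

lemma integrable_inv_jap_pow [NormedSpace ℝ V] [MeasurableSpace V] [BorelSpace V]
    [FiniteDimensional ℝ V] (μ : Measure V) [μ.IsAddHaarMeasure] {k : ℕ}
    (hk : Module.finrank ℝ V < k) : Integrable (fun x : V => (jap x ^ k)⁻¹) μ := by
  refine (integrable_rpow_neg_one_add_norm_sq (μ := μ) (r := k) (by exact_mod_cast hk)).congr
    (.of_forall fun x => ?_)
  have h : (0 : ℝ) ≤ 1 + ‖x‖ ^ 2 := by positivity
  dsimp only [jap]
  rw [Real.sqrt_eq_rpow, ← Real.rpow_mul_natCast h, ← Real.rpow_neg h]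
  ring_nf

end JapaneseBracket

namespace SchwartzMap

variable {E F : Type*} [NormedAddCommGroup E] [NormedSpace ℝ E]
  [NormedAddCommGroup F] [NormedSpace ℝ F]

theorem exists_norm_iteratedFDeriv_le_mul_norm_pow_of_flat (ψ : 𝓢(E, F))
    (hψ : ∀ k, iteratedFDeriv ℝ k ψ 0 = 0) (m k : ℕ) :
    ∃ C, 0 ≤ C ∧ ∀ y, ‖iteratedFDeriv ℝ k ψ y‖ ≤ C * ‖y‖ ^ m := by
  induction m generalizing k with
  | zero =>
    obtain ⟨C, hC, hbound⟩ := ψ.decay 0 k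
    exact ⟨C, hC.le, fun y => by simpa using hbound y⟩
  | succ m ih =>
    obtain ⟨C, hC, hbound⟩ := ih (k + 1)
    refine ⟨C, hC, fun y => ?_⟩
    have hderiv : ∀ z ∈ Metric.closedBall (0 : E) ‖y‖,
        ‖fderiv ℝ (iteratedFDeriv ℝ k ψ) z‖ ≤ C * ‖y‖ ^ m := by
      intro z hz
      rw [norm_fderiv_iteratedFDeriv]
      exact (hbound z).trans (by gcongr; simpa using hz)
    have hmvt := (convex_closedBall (0 : E) ‖y‖).norm_image_sub_le_of_norm_fderiv_le
      (fun z _ => (ψ.smooth ⊤).differentiable_iteratedFDeriv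
        (by exact_mod_cast ENat.natCast_lt_top k) z)
      hderiv (Metric.mem_closedBall_self (norm_nonneg y))
      (show y ∈ Metric.closedBall (0 : E) ‖y‖ by simp)
    rw [hψ k, sub_zero, sub_zero] at hmvt
    rwa [pow_succ, ← mul_assoc]

theorem exists_norm_apply_smul_le_of_flat (ψ : 𝓢(E, F)) (hψ : ∀ k, iteratedFDeriv ℝ k ψ 0 = 0)
    (m : ℕ) : ∃ C, ∀ ε : ℝ, 0 ≤ ε → ∀ x, ‖ψ (ε • x)‖ ≤ C * ε ^ m * jap x ^ m := by
  obtain ⟨C, hC, hbound⟩ := ψ.exists_norm_iteratedFDeriv_le_mul_norm_pow_of_flat hψ m 0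
  refine ⟨C, fun ε hε x => ?_⟩
  calc ‖ψ (ε • x)‖ ≤ C * ‖ε • x‖ ^ m := by simpa using hbound (ε • x)
    _ ≤ C * ε ^ m * jap x ^ m := by
      rw [norm_smul, Real.norm_of_nonneg hε, mul_pow, mul_assoc]
      gcongr
      exact norm_le_jap_s19 x

end SchwartzMap

lemma norm_mul_mul_le_of_weight {R : Type*} [NonUnitalSeminormedRing R] {w : ℝ} (hw : 0 < w)
    {a b c : R} {M m k : ℕ} {A B C : ℝ} (ha : w ^ (M + m + k) * ‖a‖ ≤ A)
    (hb : ‖b‖ ≤ B * w ^ M) (hc : ‖c‖ ≤ C * w ^ m) :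
    ‖a * b * c‖ ≤ A * B * C * (w ^ k)⁻¹ := by
  have hB : 0 ≤ B := nonneg_of_mul_nonneg_left ((norm_nonneg b).trans hb) (by positivity)
  have hC : 0 ≤ C := nonneg_of_mul_nonneg_left ((norm_nonneg c).trans hc) (by positivity)
  rw [← div_eq_mul_inv, le_div_iff₀ (by positivity)]
  calc ‖a * b * c‖ * w ^ k ≤ ‖a‖ * ‖b‖ * ‖c‖ * w ^ k := by gcongr; exact norm_mul₃_le
    _ ≤ ‖a‖ * (B * w ^ M) * (C * w ^ m) * w ^ k := by gcongr
    _ = w ^ (M + m + k) * ‖a‖ * (B * C) := by ring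
    _ ≤ A * (B * C) := by gcongr
    _ = A * B * C := by ring

theorem stmt19_general {n : ℕ} (Φ₁ Φ₂ : SchwartzMap (Fin n → ℝ) ℂ)
    (hder : ∀ K : ℕ, iteratedFDeriv ℝ K (fun x => Φ₁ x - Φ₂ x) 0 = 0)
    (g : ℝ → (Fin n → ℝ) → ℂ) (N : ℕ)
    (hg : ∀ a b : ℕ, ∃ c : ℝ, ∀ ε ∈ Set.Ioc (0 : ℝ) 1, ∀ x,
      ‖x‖ ^ a * ‖iteratedFDeriv ℝ b (g ε) x‖ ≤ c * ε⁻¹ ^ N)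
    (u : ℝ → (Fin n → ℝ) → ℂ)
    (hu : ∀ K : ℕ, ∃ M : ℕ, ∃ c : ℝ, ∀ ε ∈ Set.Ioc (0 : ℝ) 1, ∀ x,
      ‖iteratedFDeriv ℝ K (u ε) x‖ ≤ c * jap x ^ M * ε⁻¹ ^ M) :
    ∀ q : ℕ, ∃ c : ℝ, ∀ ε ∈ Set.Ioc (0 : ℝ) 1,
      ‖∫ x, g ε x * u ε x * (Φ₁ (ε • x) - Φ₂ (ε • x))‖ ≤ c * ε ^ q := by
  intro q
  obtain ⟨M, cu, hcu⟩ := hu 0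
  obtain ⟨cψ, hcψ⟩ := (Φ₁ - Φ₂).exists_norm_apply_smul_le_of_flat hder (q + M + N)
  set a := M + (q + M + N) + (n + 1)
  obtain ⟨c₀, hc₀⟩ := hg 0 0
  obtain ⟨c₁, hc₁⟩ := hg a 0
  refine ⟨2 ^ a * (c₀ + c₁) * cu * cψ * ∫ x : Fin n → ℝ, (jap x ^ (n + 1))⁻¹, fun ε hε => ?_⟩
  have hpt : ∀ x, ‖g ε x * u ε x * (Φ₁ (ε • x) - Φ₂ (ε • x))‖ ≤
      2 ^ a * (c₀ + c₁) * ε⁻¹ ^ N * (cu * ε⁻¹ ^ M) * (cψ * ε ^ (q + M + N)) *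
        (jap x ^ (n + 1))⁻¹ := by
    intro x
    refine norm_mul_mul_le_of_weight (M := M) (m := q + M + N) (jap_pos x) ?_ ?_ ?_
    · refine (jap_pow_mul_le x (A := c₀ * ε⁻¹ ^ N) (B := c₁ * ε⁻¹ ^ N) (norm_nonneg _)
        ?_ ?_).trans_eq (by ring)
      · simpa only [pow_zero, one_mul, norm_iteratedFDeriv_zero] using hc₀ ε hε x
      · simpa only [norm_iteratedFDeriv_zero] using hc₁ ε hε x
    · simpa only [norm_iteratedFDeriv_zero, mul_right_comm _ (jap x ^ M)] using hcu ε hε x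
    · exact hcψ ε hε.1.le x
  calc ‖∫ x, g ε x * u ε x * (Φ₁ (ε • x) - Φ₂ (ε • x))‖
      ≤ ∫ x, _ := norm_integral_le_of_norm_le
        ((integrable_inv_jap_pow volume (by simp)).const_mul _) (.of_forall hpt)
    _ = _ := by
      have hcancel : ε⁻¹ ^ N * ε⁻¹ ^ M * ε ^ (q + M + N) = ε ^ q := by
        have : ε ≠ 0 := hε.1.ne'
        rw [pow_add, pow_add, inv_pow, inv_pow]
        field_simp
      rw [integral_const_mul, ← hcancel]
      ring

/-- If `φ̂₁ − φ̂₂` has all derivatives vanishing at `0`, `g_ε` is an `𝒮`-regular net and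
`u_ε` is tempered moderate, then `∫ g_ε u_ε (φ̂₁(ε·) − φ̂₂(ε·))` is negligible. -/
theorem stmt19 {n : ℕ} (Φ₁ Φ₂ : SchwartzMap (Fin n → ℝ) ℂ)
    (h0 : Φ₁ 0 = 1) (h0' : Φ₂ 0 = 1)
    (hder : ∀ K : ℕ, iteratedFDeriv ℝ K (fun x => Φ₁ x - Φ₂ x) 0 = 0)
    (g : ℝ → (Fin n → ℝ) → ℂ) (N : ℕ)
    (hgsm : ∀ ε ∈ Set.Ioc (0 : ℝ) 1, ContDiff ℝ (⊤ : ℕ∞) (g ε))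
    (hg : ∀ a b : ℕ, ∃ c : ℝ, ∀ ε ∈ Set.Ioc (0 : ℝ) 1, ∀ x,
      ‖x‖ ^ a * ‖iteratedFDeriv ℝ b (g ε) x‖ ≤ c * ε⁻¹ ^ N)
    (u : ℝ → (Fin n → ℝ) → ℂ)
    (husm : ∀ ε ∈ Set.Ioc (0 : ℝ) 1, ContDiff ℝ (⊤ : ℕ∞) (u ε))
    (hu : ∀ K : ℕ, ∃ M : ℕ, ∃ c : ℝ, ∀ ε ∈ Set.Ioc (0 : ℝ) 1, ∀ x,
      ‖iteratedFDeriv ℝ K (u ε) x‖ ≤ c * jap x ^ M * ε⁻¹ ^ M) :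
    ∀ q : ℕ, ∃ c : ℝ, ∀ ε ∈ Set.Ioc (0 : ℝ) 1,
      ‖∫ x, g ε x * u ε x * (Φ₁ (ε • x) - Φ₂ (ε • x))‖ ≤ c * ε ^ q :=
  stmt19_general Φ₁ Φ₂ hder g N hg u hu
end
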